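/- arXiv:2003.10640 — 5 statements merged into one kernel-verified Lean document; each statement's English description precedes it below -/
import Mathlib

section
/- The numbers u_n(231) satisfy u_0(231) = u_1(231) = 1 and, for all n ≥ 2, u_n(231) = (Σ_{a+b=n−1} u_a(231)·u_b(231)) − u_{n−2}(231); equivalently, the generating function U(z) = Σ_{n≥0} u_n(231) z^n satisfies U(z) = z·U(z)·(U(z) − z) + 1. -/
/-- `s` is the index set of an increasing subsequence of the word `f`. -/
def IsIncSubseq {n : ℕ} {α : Type*} [Preorder α] (f : Fin n → α) (s : Finset (Fin n)) : Prop :=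
  ∀ i ∈ s, ∀ j ∈ s, i < j → f i < f j

/-- `f` has a unique longest increasing subsequence. -/
def HasULIS {n : ℕ} {α : Type*} [Preorder α] (f : Fin n → α) : Prop :=
  ∃! s : Finset (Fin n), IsIncSubseq f s ∧
    ∀ t : Finset (Fin n), IsIncSubseq f t → t.card ≤ s.card

/-- `p` contains the pattern `q`. -/
def Contains {k n : ℕ} (q : Equiv.Perm (Fin k)) (p : Equiv.Perm (Fin n)) : Prop :=
  ∃ f : Fin k → Fin n, StrictMono f ∧ ∀ a b : Fin k, p (f a) < p (f b) ↔ q a < q b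

/-- `p` avoids the pattern `q`. -/
def Avoids {k n : ℕ} (q : Equiv.Perm (Fin k)) (p : Equiv.Perm (Fin n)) : Prop :=
  ¬ Contains q p

def pattern321 : Equiv.Perm (Fin 3) := ⟨![2,1,0], ![2,1,0], by decide, by decide⟩
def pattern231 : Equiv.Perm (Fin 3) := ⟨![1,2,0], ![2,0,1], by decide, by decide⟩
def pattern132 : Equiv.Perm (Fin 3) := ⟨![0,2,1], ![0,2,1], by decide, by decide⟩
def pattern123 : Equiv.Perm (Fin 3) := Equiv.refl (Fin 3)

/-- the number of `q`-avoiding permutations of length `n` with a unique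
longest increasing subsequence. -/
noncomputable def uNum {k : ℕ} (q : Equiv.Perm (Fin k)) (n : ℕ) : ℕ :=
  Nat.card {p : Equiv.Perm (Fin n) // Avoids q p ∧ HasULIS ⇑p}

/-- the number of `q`-avoiding involutions of length `n` with a unique
longest increasing subsequence. -/
noncomputable def iNum {k : ℕ} (q : Equiv.Perm (Fin k)) (n : ℕ) : ℕ :=
  Nat.card {p : Equiv.Perm (Fin n) // p⁻¹ = p ∧ Avoids q p ∧ HasULIS ⇑p}

/-- A permutation is indecomposable if it cannot be cut into a (nonempty) prefix and
a (nonempty) suffix so that every entry of the prefix is smaller than every entry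
of the suffix. -/
def Indecomposable {m : ℕ} (w : Equiv.Perm (Fin m)) : Prop :=
  ¬ ∃ j : ℕ, 1 ≤ j ∧ j < m ∧ ∀ a b : Fin m, (a : ℕ) < j → j ≤ (b : ℕ) → w a < w b

/-!
Cut a 231-avoiding permutation of length `m + 1` at the position `a` of its maximum. An entry left
of the maximum that exceeded an entry right of it would form a 231 with the maximum, so the
permutation is the direct sum of a permutation `α` of length `a` and a permutation `b β` of length
`b + 1 = m - a + 1` that starts with its maximum; such a sum avoids 231 iff `α` and `β` do, since
231 is indecomposable and does not start with its largest letter. The longest increasing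
subsequences of a direct sum are the unions of longest ones of the summands, so the sum has a ULIS
iff both summands do; and `b β` has one iff `β` does and `b ≠ 1` (for `b = 1` the two singletons
tie, while for `b ≥ 2` a ULIS of `β` has length at least two and beats the maximum). Hence
`u (m + 1) = ∑_{a + b = m} u a * w b` with `w b = u b - [b = 1]`, which is both the recurrence and
the coefficientwise form of `U = z U (U - z) + 1`.
-/

open Finset Equiv

theorem existsUnique_prod_and {α β : Type*} {p : α → Prop} {q : β → Prop} :
    (∃! x : α × β, p x.1 ∧ q x.2) ↔ (∃! a, p a) ∧ ∃! b, q b := by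
  constructor
  · rintro ⟨⟨a, b⟩, ⟨ha, hb⟩, huniq⟩
    exact ⟨⟨a, ha, fun a' ha' => congrArg Prod.fst (huniq (a', b) ⟨ha', hb⟩)⟩,
      ⟨b, hb, fun b' hb' => congrArg Prod.snd (huniq (a, b') ⟨ha, hb'⟩)⟩⟩
  · rintro ⟨⟨a, ha, hua⟩, ⟨b, hb, hub⟩⟩
    exact ⟨(a, b), ⟨ha, hb⟩, fun x hx => Prod.ext (hua _ hx.1) (hub _ hx.2)⟩

theorem existsUnique_iff_of_injective {α β : Type*} {φ : α → β} (hφ : Function.Injective φ)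
    {p : α → Prop} {q : β → Prop} (hpq : ∀ a, q (φ a) ↔ p a)
    (hq : ∀ b, q b → b ∈ Set.range φ) : (∃! b, q b) ↔ ∃! a, p a := by
  constructor
  · rintro ⟨_, hb, huniq⟩
    obtain ⟨a, rfl⟩ := hq _ hb
    exact ⟨a, (hpq a).mp hb, fun a' ha' => hφ (huniq _ ((hpq a').mpr ha'))⟩
  · rintro ⟨a, ha, huniq⟩
    refine ⟨φ a, (hpq a).mpr ha, fun b hb => ?_⟩
    obtain ⟨a', rfl⟩ := hq b hb
    rw [huniq a' ((hpq a').mp hb)]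

section IncSubseq

variable {α β : Type*} {n : ℕ}

def IsLongestIncSubseq [Preorder α] (f : Fin n → α) (s : Finset (Fin n)) : Prop :=
  IsIncSubseq f s ∧ ∀ t : Finset (Fin n), IsIncSubseq f t → #t ≤ #s

theorem hasULIS_iff_existsUnique [Preorder α] (f : Fin n → α) :
    HasULIS f ↔ ∃! s, IsLongestIncSubseq f s := Iff.rfl

theorem isIncSubseq_comp_iff [LinearOrder α] [Preorder β] {φ : α → β} (hφ : StrictMono φ)
    (f : Fin n → α) (s : Finset (Fin n)) : IsIncSubseq (φ ∘ f) s ↔ IsIncSubseq f s := by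
  simp only [IsIncSubseq, Function.comp_apply, hφ.lt_iff_lt]

theorem hasULIS_comp_iff [LinearOrder α] [Preorder β] {φ : α → β} (hφ : StrictMono φ)
    (f : Fin n → α) : HasULIS (φ ∘ f) ↔ HasULIS f := by
  simp only [HasULIS, isIncSubseq_comp_iff hφ]

theorem hasULIS_of_strictMono [Preorder α] {f : Fin n → α} (hf : StrictMono f) : HasULIS f := by
  have huniv : IsIncSubseq f univ := fun i _ j _ hij => hf hij
  refine ⟨univ, ⟨huniv, fun t _ => card_le_univ t⟩, fun t ht => ?_⟩
  exact eq_univ_of_card t (le_antisymm (card_le_univ t) (ht.2 univ huniv))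

theorem hasULIS_of_subsingleton [Preorder α] [Subsingleton (Fin n)] (f : Fin n → α) :
    HasULIS f :=
  hasULIS_of_strictMono fun i j hij => absurd hij (Subsingleton.elim i j ▸ lt_irrefl i)

theorem IsIncSubseq.card_le_one_of_antitone [Preorder α] {f : Fin n → α} {s : Finset (Fin n)}
    (hs : IsIncSubseq f s) (hf : Antitone f) : #s ≤ 1 :=
  card_le_one.mpr fun i hi j hj => by
    by_contra hij
    rcases lt_or_gt_of_ne hij with h | h
    · exact (hs i hi j hj h).not_ge (hf h.le)
    · exact (hs j hj i hi h).not_ge (hf h.le)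

theorem not_hasULIS_of_antitone [Preorder α] {f : Fin n → α} (hf : Antitone f) (hn : 2 ≤ n) :
    ¬ HasULIS f := by
  have hsingle (i : Fin n) : IsLongestIncSubseq f {i} :=
    ⟨fun x hx y hy hxy => by simp_all, fun t ht => by
      simpa using ht.card_le_one_of_antitone hf⟩
  rintro ⟨s, -, huniq⟩
  have h01 := (huniq _ (hsingle ⟨0, by omega⟩)).trans (huniq _ (hsingle ⟨1, by omega⟩)).symm
  simp [Fin.ext_iff] at h01

end IncSubseq

section Append

variable {α : Type*} {a c : ℕ}

theorem Fin.castAdd_lt_natAdd (i : Fin a) (j : Fin c) : Fin.castAdd c i < Fin.natAdd a j :=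
  Fin.lt_def.mpr (by simp; omega)

def finsetAppendEquiv (a c : ℕ) : Finset (Fin (a + c)) ≃ Finset (Fin a) × Finset (Fin c) :=
  finSumFinEquiv.symm.finsetCongr.trans Finset.sumEquiv.toEquiv

@[simp]
theorem castAdd_mem_finsetAppendEquiv_symm {x : Finset (Fin a) × Finset (Fin c)} {i : Fin a} :
    Fin.castAdd c i ∈ (finsetAppendEquiv a c).symm x ↔ i ∈ x.1 := by
  simp [finsetAppendEquiv]

@[simp]
theorem natAdd_mem_finsetAppendEquiv_symm {x : Finset (Fin a) × Finset (Fin c)} {j : Fin c} :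
    Fin.natAdd a j ∈ (finsetAppendEquiv a c).symm x ↔ j ∈ x.2 := by
  simp [finsetAppendEquiv]

theorem card_finsetAppendEquiv_symm (x : Finset (Fin a) × Finset (Fin c)) :
    #((finsetAppendEquiv a c).symm x) = #x.1 + #x.2 := by
  simp [finsetAppendEquiv]

theorem isIncSubseq_append_iff [Preorder α] {u : Fin a → α} {v : Fin c → α}
    (huv : ∀ i j, u i < v j) (x : Finset (Fin a) × Finset (Fin c)) :
    IsIncSubseq (Fin.append u v) ((finsetAppendEquiv a c).symm x) ↔
      IsIncSubseq u x.1 ∧ IsIncSubseq v x.2 := by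
  refine ⟨fun h => ⟨fun i hi j hj hij => ?_, fun i hi j hj hij => ?_⟩, fun ⟨hu, hv⟩ => ?_⟩
  · simpa using h _ (castAdd_mem_finsetAppendEquiv_symm.mpr hi) _
      (castAdd_mem_finsetAppendEquiv_symm.mpr hj) (Fin.strictMono_castAdd c hij)
  · simpa using h _ (natAdd_mem_finsetAppendEquiv_symm.mpr hi) _
      (natAdd_mem_finsetAppendEquiv_symm.mpr hj) (Fin.strictMono_natAdd a hij)
  intro k hk l hl hkl
  induction k using Fin.addCases with
  | left i =>
    induction l using Fin.addCases with
    | left j =>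
      have hij := (Fin.strictMono_castAdd c).lt_iff_lt.mp hkl
      simpa using hu i (by simpa using hk) j (by simpa using hl) hij
    | right j => simpa using huv i j
  | right i =>
    induction l using Fin.addCases with
    | left j => exact absurd hkl (Fin.castAdd_lt_natAdd j i).not_gt
    | right j =>
      have hij := (Fin.strictMono_natAdd a).lt_iff_lt.mp hkl
      simpa using hv i (by simpa using hk) j (by simpa using hl) hij

theorem isLongestIncSubseq_append_iff [Preorder α] {u : Fin a → α} {v : Fin c → α}
    (huv : ∀ i j, u i < v j) (x : Finset (Fin a) × Finset (Fin c)) :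
    IsLongestIncSubseq (Fin.append u v) ((finsetAppendEquiv a c).symm x) ↔
      IsLongestIncSubseq u x.1 ∧ IsLongestIncSubseq v x.2 := by
  simp only [IsLongestIncSubseq, ← (finsetAppendEquiv a c).symm.forall_congr_right,
    isIncSubseq_append_iff huv, card_finsetAppendEquiv_symm, Prod.forall]
  constructor
  · rintro ⟨⟨hu, hv⟩, hmax⟩
    exact ⟨⟨hu, fun t ht => by have := hmax t x.2 ⟨ht, hv⟩; omega⟩,
      ⟨hv, fun t ht => by have := hmax x.1 t ⟨hu, ht⟩; omega⟩⟩
  · rintro ⟨⟨hu, hmaxu⟩, ⟨hv, hmaxv⟩⟩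
    exact ⟨⟨hu, hv⟩, fun t₁ t₂ ht => add_le_add (hmaxu t₁ ht.1) (hmaxv t₂ ht.2)⟩

theorem hasULIS_append_iff [Preorder α] {u : Fin a → α} {v : Fin c → α}
    (huv : ∀ i j, u i < v j) : HasULIS (Fin.append u v) ↔ HasULIS u ∧ HasULIS v := by
  simp only [hasULIS_iff_existsUnique, isLongestIncSubseq_append_iff huv,
    ← (finsetAppendEquiv a c).symm.existsUnique_congr_right]
  exact existsUnique_prod_and

end Append

section Cons

variable {α : Type*} {b : ℕ}

theorem isIncSubseq_pair [Preorder α] {n : ℕ} {f : Fin n → α} {i j : Fin n} (hij : i < j)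
    (hf : f i < f j) : IsIncSubseq f {i, j} := by
  intro x hx y hy hxy
  simp only [mem_insert, mem_singleton] at hx hy
  rcases hx with rfl | rfl <;> rcases hy with rfl | rfl
  · exact absurd hxy (lt_irrefl _)
  · exact hf
  · exact absurd hij hxy.not_gt
  · exact absurd hxy (lt_irrefl _)

theorem isIncSubseq_cons_map_succEmb_iff [Preorder α] {M : α} {g : Fin b → α}
    (t : Finset (Fin b)) :
    IsIncSubseq (Fin.cons M g : Fin (b + 1) → α) (t.map (Fin.succEmb b)) ↔ IsIncSubseq g t := by
  simp [IsIncSubseq]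

theorem IsIncSubseq.card_le_one_of_zero_mem [Preorder α] {M : α} {g : Fin b → α}
    (hg : ∀ j, g j < M) {s : Finset (Fin (b + 1))} (hs : IsIncSubseq (Fin.cons M g) s)
    (h0 : 0 ∈ s) : #s ≤ 1 := by
  refine card_le_one.mpr fun x hx y hy => ?_
  suffices ∀ z ∈ s, z = 0 from (this x hx).trans (this y hy).symm
  intro z hz
  induction z using Fin.cases with
  | zero => rfl
  | succ j => simpa using (hg j).not_gt (hs 0 h0 _ hz (Fin.succ_pos j))

theorem exists_eq_map_succEmb {s : Finset (Fin (b + 1))} (h0 : 0 ∉ s) :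
    ∃ t : Finset (Fin b), s = t.map (Fin.succEmb b) := by
  have hs : s ⊆ univ.map (Fin.succEmb b) := by
    rw [← Fin.Ioi_zero_eq_map]
    intro x hx
    simpa [Fin.pos_iff_ne_zero] using ne_of_mem_of_not_mem hx h0
  obtain ⟨t, -, rfl⟩ := subset_map_iff.mp hs
  exact ⟨t, rfl⟩

theorem zero_notMem_of_isLongestIncSubseq_cons [Preorder α] {M : α} {g : Fin b → α}
    (hg : ∀ j, g j < M) {i j : Fin b} (hij : i < j) (hgij : g i < g j)
    {s : Finset (Fin (b + 1))} (hs : IsLongestIncSubseq (Fin.cons M g) s) : 0 ∉ s := fun h0 => by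
  have h2 := hs.2 _ ((isIncSubseq_cons_map_succEmb_iff _).mpr (isIncSubseq_pair hij hgij))
  rw [card_map, card_pair hij.ne] at h2
  have := hs.1.card_le_one_of_zero_mem hg h0
  omega

theorem isLongestIncSubseq_cons_map_succEmb_iff [Preorder α] {M : α} {g : Fin b → α}
    (hg : ∀ j, g j < M) {i j : Fin b} (hij : i < j) (hgij : g i < g j) (t : Finset (Fin b)) :
    IsLongestIncSubseq (Fin.cons M g) (t.map (Fin.succEmb b)) ↔ IsLongestIncSubseq g t := by
  simp only [IsLongestIncSubseq, isIncSubseq_cons_map_succEmb_iff, card_map]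
  refine ⟨fun ⟨ht, hmax⟩ => ⟨ht, fun t' ht' => ?_⟩, fun ⟨ht, hmax⟩ => ⟨ht, fun s hs => ?_⟩⟩
  · simpa using hmax _ ((isIncSubseq_cons_map_succEmb_iff t').mpr ht')
  by_cases h0 : 0 ∈ s
  · have h2 := hmax _ (isIncSubseq_pair hij hgij)
    rw [card_pair hij.ne] at h2
    have := hs.card_le_one_of_zero_mem hg h0
    omega
  · obtain ⟨t', rfl⟩ := exists_eq_map_succEmb h0
    simpa using hmax t' ((isIncSubseq_cons_map_succEmb_iff t').mp hs)

theorem hasULIS_cons_iff_of_lt [Preorder α] {M : α} {g : Fin b → α} (hg : ∀ j, g j < M)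
    {i j : Fin b} (hij : i < j) (hgij : g i < g j) :
    HasULIS (Fin.cons M g : Fin (b + 1) → α) ↔ HasULIS g :=
  existsUnique_iff_of_injective (map_injective (Fin.succEmb b))
    (isLongestIncSubseq_cons_map_succEmb_iff hg hij hgij)
    fun _ hs =>
      (exists_eq_map_succEmb (zero_notMem_of_isLongestIncSubseq_cons hg hij hgij hs)).imp
        fun _ h => h.symm

theorem hasULIS_cons_iff [LinearOrder α] {M : α} {g : Fin b → α} (hg : ∀ j, g j < M) :
    HasULIS (Fin.cons M g : Fin (b + 1) → α) ↔ HasULIS g ∧ b ≠ 1 := by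
  by_cases hasc : ∃ i j, i < j ∧ g i < g j
  · obtain ⟨i, j, hij, hgij⟩ := hasc
    have hb : b ≠ 1 := by have := j.2; have := Fin.lt_def.mp hij; omega
    simp [hasULIS_cons_iff_of_lt hg hij hgij, hb]
  have hanti : Antitone g :=
    antitone_iff_forall_lt.mpr fun i j hij => not_lt.mp fun h => hasc ⟨i, j, hij, h⟩
  rcases Nat.eq_zero_or_pos b with rfl | hb
  · simp [hasULIS_of_subsingleton]
  have hcons : Antitone (Fin.cons M g : Fin (b + 1) → α) := by
    refine antitone_iff_forall_lt.mpr fun x y hxy => ?_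
    induction y using Fin.cases with
    | zero => exact absurd hxy (Fin.not_lt_zero x)
    | succ j =>
      induction x using Fin.cases with
      | zero => exact (hg j).le
      | succ i => exact hanti (Fin.succ_lt_succ_iff.mp hxy).le
  simp only [not_hasULIS_of_antitone hcons (by omega), false_iff, not_and, not_not]
  intro h
  by_contra hb1
  exact not_hasULIS_of_antitone hanti (by omega) h

end Cons

section Perm

variable {a b c : ℕ}

noncomputable def permAppend (α : Perm (Fin a)) (γ : Perm (Fin c)) : Perm (Fin (a + c)) :=
  Equiv.ofBijective (Fin.append (Fin.castAdd c ∘ α) (Fin.natAdd a ∘ γ)) <|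
    Finite.injective_iff_bijective.mp <| Fin.append_injective_iff.mpr
      ⟨(Fin.castAdd_injective a c).comp α.injective, (Fin.natAdd_injective c a).comp γ.injective,
        fun _ _ => (Fin.castAdd_lt_natAdd _ _).ne⟩

noncomputable def permConsLast (β : Perm (Fin b)) : Perm (Fin (b + 1)) :=
  Equiv.ofBijective (Fin.cons (Fin.last b) (Fin.castSucc ∘ β)) <|
    Finite.injective_iff_bijective.mp <| Fin.cons_injective_iff.mpr
      ⟨fun ⟨j, hj⟩ => (Fin.castSucc_lt_last (β j)).ne hj,
        (Fin.castSucc_injective b).comp β.injective⟩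

variable {α : Perm (Fin a)} {β : Perm (Fin b)} {γ : Perm (Fin c)}

theorem coe_permAppend :
    ⇑(permAppend α γ) = Fin.append (Fin.castAdd c ∘ α) (Fin.natAdd a ∘ γ) :=
  rfl

@[simp]
theorem permAppend_castAdd (i : Fin a) :
    permAppend α γ (Fin.castAdd c i) = Fin.castAdd c (α i) :=
  Fin.append_left _ _ i

@[simp]
theorem permAppend_natAdd (j : Fin c) : permAppend α γ (Fin.natAdd a j) = Fin.natAdd a (γ j) :=
  Fin.append_right _ _ j

theorem coe_permConsLast : ⇑(permConsLast β) = Fin.cons (Fin.last b) (Fin.castSucc ∘ β) :=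
  rfl

@[simp]
theorem permConsLast_zero : permConsLast β 0 = Fin.last b := by
  simp [coe_permConsLast]

@[simp]
theorem permConsLast_succ (j : Fin b) : permConsLast β j.succ = (β j).castSucc := by
  simp [coe_permConsLast]

theorem permAppend_inj {α α' : Perm (Fin a)} {γ γ' : Perm (Fin c)} :
    permAppend α γ = permAppend α' γ' ↔ α = α' ∧ γ = γ' := by
  refine ⟨fun h => ⟨?_, ?_⟩, fun ⟨hα, hγ⟩ => hα ▸ hγ ▸ rfl⟩
  · ext i
    simpa using congrArg Fin.val (DFunLike.congr_fun h (Fin.castAdd c i))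
  · ext j
    simpa using congrArg Fin.val (DFunLike.congr_fun h (Fin.natAdd a j))

theorem permConsLast_injective : Function.Injective (permConsLast (b := b)) := fun β β' h => by
  ext j
  simpa using congrArg Fin.val (DFunLike.congr_fun h j.succ)

theorem hasULIS_permAppend : HasULIS ⇑(permAppend α γ) ↔ HasULIS ⇑α ∧ HasULIS ⇑γ := by
  rw [coe_permAppend, hasULIS_append_iff (u := Fin.castAdd c ∘ α) (v := Fin.natAdd a ∘ γ)
      fun i j => Fin.castAdd_lt_natAdd _ _,
    hasULIS_comp_iff (Fin.strictMono_castAdd c), hasULIS_comp_iff (Fin.strictMono_natAdd a)]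

theorem hasULIS_permConsLast : HasULIS ⇑(permConsLast β) ↔ HasULIS ⇑β ∧ b ≠ 1 := by
  rw [coe_permConsLast,
    hasULIS_cons_iff (g := Fin.castSucc ∘ β) fun j => Fin.castSucc_lt_last _,
    hasULIS_comp_iff Fin.strictMono_castSucc]

end Perm

section Pattern

variable {a b c k m n : ℕ} {α : Perm (Fin a)} {β : Perm (Fin b)} {γ : Perm (Fin c)}

theorem contains_iff_of_apply_eq {q : Perm (Fin k)} {p' : Perm (Fin m)} {p : Perm (Fin n)}
    {e φ : Fin m → Fin n} (he : StrictMono e) (hφ : StrictMono φ)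
    (hp : ∀ x, p (e x) = φ (p' x)) :
    Contains q p' ↔ ∃ f : Fin k → Fin m,
      StrictMono (e ∘ f) ∧ ∀ i j, p (e (f i)) < p (e (f j)) ↔ q i < q j := by
  refine exists_congr fun f => ?_
  simp only [StrictMono, Function.comp_apply, he.lt_iff_lt, hp, hφ.lt_iff_lt]

theorem permAppend_lt_iff (x : Fin (a + c)) : (permAppend α γ x : ℕ) < a ↔ (x : ℕ) < a := by
  induction x using Fin.addCases with
  | left i => simp
  | right j => simp

theorem Indecomposable.forall_lt_or_forall_le {q : Perm (Fin k)} (hq : Indecomposable q)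
    {f : Fin k → Fin (a + c)} (hf : StrictMono f)
    (hv : ∀ i j, permAppend α γ (f i) < permAppend α γ (f j) ↔ q i < q j) :
    (∀ x, (f x : ℕ) < a) ∨ ∀ x, a ≤ (f x : ℕ) := by
  -- Otherwise the first letter of `q` that `f` sends to the right block splits `q`.
  by_contra! h
  obtain ⟨⟨x, hx⟩, ⟨y, hy⟩⟩ := h
  classical
  have hex : ∃ j, ∃ h : j < k, a ≤ (f ⟨j, h⟩ : ℕ) := ⟨x, x.2, hx⟩
  obtain ⟨hjk, hj⟩ := Nat.find_spec hex
  refine hq ⟨Nat.find hex, ?_, hjk, fun i i' hi hi' => (hv i i').mp ?_⟩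
  · rw [Nat.one_le_iff_ne_zero]
    intro h0
    have hle : (⟨Nat.find hex, hjk⟩ : Fin k) ≤ y := Fin.le_def.mpr (by simp [h0])
    have := Fin.le_def.mp (hf.monotone hle)
    omega
  · have hfi : (f i : ℕ) < a := by simpa using Nat.find_min hex hi
    have hfi' : a ≤ (f i' : ℕ) := hj.trans (hf.monotone (Fin.le_def.mpr hi'))
    have h₁ := (permAppend_lt_iff (α := α) (γ := γ) (f i)).mpr hfi
    have h₂ := (permAppend_lt_iff (α := α) (γ := γ) (f i')).not.mpr (by omega)
    exact Fin.lt_def.mpr (by omega)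

theorem contains_permAppend_iff {q : Perm (Fin k)} (hq : Indecomposable q) :
    Contains q (permAppend α γ) ↔ Contains q α ∨ Contains q γ := by
  rw [contains_iff_of_apply_eq (p' := α) (Fin.strictMono_castAdd c) (Fin.strictMono_castAdd c)
      (permAppend_castAdd (γ := γ)),
    contains_iff_of_apply_eq (p' := γ) (Fin.strictMono_natAdd a) (Fin.strictMono_natAdd a)
      (permAppend_natAdd (α := α))]
  constructor
  · rintro ⟨f, hf, hv⟩
    rcases hq.forall_lt_or_forall_le hf hv with hL | hR
    · have hf' (x : Fin k) : Fin.castAdd c ((f x).castLT (hL x)) = f x :=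
        Fin.castAdd_castLT _ _ _
      exact Or.inl ⟨fun x => (f x).castLT (hL x),
        by simpa only [Function.comp_def, hf'] using And.intro hf hv⟩
    · have hlt (x : Fin k) : (f x : ℕ) - a < c := by have := hR x; omega
      have hf' (x : Fin k) : Fin.natAdd a ⟨f x - a, hlt x⟩ = f x := by
        ext; simp; have := hR x; omega
      exact Or.inr ⟨fun x => ⟨f x - a, hlt x⟩,
        by simpa only [Function.comp_def, hf'] using And.intro hf hv⟩
  · rintro (⟨f, hf, hv⟩ | ⟨f, hf, hv⟩)
    exacts [⟨_, hf, hv⟩, ⟨_, hf, hv⟩]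

theorem contains_permConsLast_iff {q : Perm (Fin (k + 1))} (hq : q 0 ≠ Fin.last k) :
    Contains q (permConsLast β) ↔ Contains q β := by
  rw [contains_iff_of_apply_eq (p := permConsLast β) Fin.strictMono_succ
    Fin.strictMono_castSucc permConsLast_succ]
  constructor
  · rintro ⟨f, hf, hv⟩
    -- An occurrence through position `0` would send the first letter of `q` to the maximum.
    have hf0 : f 0 ≠ 0 := by
      intro hf0
      have hlt (x : Fin (k + 1)) (hx : x ≠ 0) : q x < q 0 := by
        refine (hv x 0).mp ?_
        rw [hf0, permConsLast_zero, Fin.lt_last_iff_ne_last, ← permConsLast_zero (β := β),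
          (permConsLast β).injective.ne_iff, ← hf0]
        exact hf.injective.ne hx
      have hx : q.symm (Fin.last k) ≠ 0 := fun h => hq (by rw [← h, apply_symm_apply])
      exact (hlt _ hx).not_ge (by simpa using Fin.le_last (q 0))
    have hpos (x : Fin (k + 1)) : f x ≠ 0 := Fin.pos_iff_ne_zero.mp
      ((Fin.pos_iff_ne_zero.mpr hf0).trans_le (hf.monotone (Fin.zero_le x)))
    have hf' (x : Fin (k + 1)) : ((f x).pred (hpos x)).succ = f x := Fin.succ_pred _ _
    exact ⟨fun x => (f x).pred (hpos x),
      by simpa only [Function.comp_def, hf'] using And.intro hf hv⟩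
  · rintro ⟨f, hf, hv⟩
    exact ⟨_, hf, hv⟩

theorem indecomposable_pattern231 : Indecomposable pattern231 := by
  rintro ⟨j, hj1, hj3, h⟩
  exact absurd (h 0 2 (by simp; omega) (by simp; omega)) (by decide)

theorem contains231_of_lt {p : Perm (Fin n)} {x y z : Fin n} (hxy : x < y) (hyz : y < z)
    (hzx : p z < p x) (hxy' : p x < p y) : Contains pattern231 p := by
  refine ⟨![x, y, z], Fin.strictMono_iff_lt_succ.mpr fun i => ?_, fun i j => ?_⟩
  · fin_cases i <;> simpa
  · have hzy := hzx.trans hxy'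
    fin_cases i <;> fin_cases j <;> simp [pattern231, *, hxy'.not_gt, hzx.not_gt, hzy.not_gt]

theorem avoids231_permAppend :
    Avoids pattern231 (permAppend α γ) ↔ Avoids pattern231 α ∧ Avoids pattern231 γ := by
  simp only [Avoids, contains_permAppend_iff indecomposable_pattern231, not_or]

theorem avoids231_permConsLast : Avoids pattern231 (permConsLast β) ↔ Avoids pattern231 β :=
  not_congr (contains_permConsLast_iff (by decide))

end Pattern

section Decomposition

variable {a b c : ℕ}

theorem exists_eq_permAppend {p : Perm (Fin (a + c))}
    (hp : ∀ i j, p (Fin.castAdd c i) < p (Fin.natAdd a j)) :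
    ∃ (α : Perm (Fin a)) (γ : Perm (Fin c)), p = permAppend α γ := by
  have hL (i : Fin a) : (p (Fin.castAdd c i) : ℕ) < a := by
    have := card_le_card_of_injOn (fun j => p (Fin.natAdd a j)) (s := univ)
      (t := Ioi (p (Fin.castAdd c i))) (fun j _ => by simpa using hp i j)
      ((p.injective.comp (Fin.natAdd_injective c a)).injOn)
    simp at this
    omega
  have hR (j : Fin c) : a ≤ (p (Fin.natAdd a j) : ℕ) := by
    have := card_le_card_of_injOn (fun i => p (Fin.castAdd c i)) (s := univ)
      (t := Iio (p (Fin.natAdd a j))) (fun i _ => by simpa using hp i j)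
      ((p.injective.comp (Fin.castAdd_injective a c)).injOn)
    simpa using this
  refine ⟨.ofBijective (fun i => (p (Fin.castAdd c i)).castLT (hL i)) ?_,
    .ofBijective (fun j => ⟨p (Fin.natAdd a j) - a, by have := hR j; omega⟩) ?_, ?_⟩
  · refine Finite.injective_iff_bijective.mp fun i i' h => ?_
    exact Fin.castAdd_injective a c (p.injective (Fin.ext (by simpa [Fin.ext_iff] using h)))
  · refine Finite.injective_iff_bijective.mp fun j j' h => ?_
    have := hR j
    have := hR j'
    exact Fin.natAdd_injective c a (p.injective (Fin.ext (by simp [Fin.ext_iff] at h; omega)))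
  · ext x
    induction x using Fin.addCases with
    | left i => simp
    | right j => simp; have := hR j; omega

theorem exists_eq_permConsLast {p : Perm (Fin (b + 1))} (hp : p 0 = Fin.last b) :
    ∃ β : Perm (Fin b), p = permConsLast β := by
  have hne (j : Fin b) : p j.succ ≠ Fin.last b :=
    hp ▸ p.injective.ne (Fin.succ_ne_zero j)
  refine ⟨.ofBijective (fun j => (p j.succ).castPred (hne j))
    (Finite.injective_iff_bijective.mp fun j j' h => ?_), ?_⟩
  · simpa using p.injective (Fin.castPred_inj.mp h)
  · ext x
    induction x using Fin.cases with
    | zero => simp [hp]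
    | succ j => simp

theorem apply_castAdd_lt_apply_natAdd_of_avoids231 {p : Perm (Fin (a + (b + 1)))}
    (hp : Avoids pattern231 p) (hmax : p (Fin.natAdd a 0) = Fin.last (a + b))
    (i : Fin a) (j : Fin (b + 1)) : p (Fin.castAdd (b + 1) i) < p (Fin.natAdd a j) := by
  have hlast : p (Fin.castAdd (b + 1) i) < p (Fin.natAdd a 0) := by
    have hne := p.injective.ne (Fin.castAdd_lt_natAdd i 0).ne
    rw [hmax] at hne ⊢
    exact Fin.lt_last_iff_ne_last.mpr hne
  induction j using Fin.cases with
  | zero => exact hlast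
  | succ j =>
    refine lt_of_le_of_ne (not_lt.mp fun h => hp ?_)
      (p.injective.ne (Fin.castAdd_lt_natAdd _ _).ne)
    exact contains231_of_lt (Fin.castAdd_lt_natAdd i 0)
      ((Fin.strictMono_natAdd a) (Fin.succ_pos j)) h hlast

theorem exists_eq_permAppend_permConsLast {p : Perm (Fin (a + (b + 1)))}
    (hp : Avoids pattern231 p) (hmax : p (Fin.natAdd a 0) = Fin.last (a + b)) :
    ∃ (α : Perm (Fin a)) (β : Perm (Fin b)), p = permAppend α (permConsLast β) := by
  obtain ⟨α, γ, rfl⟩ :=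
    exists_eq_permAppend (apply_castAdd_lt_apply_natAdd_of_avoids231 hp hmax)
  obtain ⟨β, rfl⟩ := exists_eq_permConsLast (by simpa [Fin.ext_iff] using hmax)
  exact ⟨α, β, rfl⟩

end Decomposition

section Counting

variable {a b : ℕ}

theorem avoids231_and_hasULIS_permAppend_permConsLast {α : Perm (Fin a)} {β : Perm (Fin b)} :
    (Avoids pattern231 (permAppend α (permConsLast β)) ∧
        HasULIS ⇑(permAppend α (permConsLast β))) ↔
      (Avoids pattern231 α ∧ HasULIS ⇑α) ∧ (Avoids pattern231 β ∧ HasULIS ⇑β) ∧ b ≠ 1 := by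
  rw [avoids231_permAppend, avoids231_permConsLast, hasULIS_permAppend, hasULIS_permConsLast]
  tauto

theorem card_avoids231_hasULIS_and_apply_natAdd_eq_last (a b : ℕ) :
    Nat.card {p : Perm (Fin (a + (b + 1))) //
        (Avoids pattern231 p ∧ HasULIS ⇑p) ∧ p (Fin.natAdd a 0) = Fin.last (a + b)} =
      uNum pattern231 a * if b = 1 then 0 else uNum pattern231 b := by
  let glue (x : {α : Perm (Fin a) // Avoids pattern231 α ∧ HasULIS ⇑α} ×
      {β : Perm (Fin b) // (Avoids pattern231 β ∧ HasULIS ⇑β) ∧ b ≠ 1}) :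
      {p : Perm (Fin (a + (b + 1))) //
        (Avoids pattern231 p ∧ HasULIS ⇑p) ∧ p (Fin.natAdd a 0) = Fin.last (a + b)} :=
    ⟨permAppend x.1 (permConsLast x.2),
      avoids231_and_hasULIS_permAppend_permConsLast.mpr ⟨x.1.2, x.2.2.1, x.2.2.2⟩,
      by simp⟩
  have hglue : Function.Bijective glue := by
    refine ⟨fun x y h => ?_, fun ⟨p, hp, hmax⟩ => ?_⟩
    · obtain ⟨h₁, h₂⟩ := permAppend_inj.mp (congrArg Subtype.val h)
      exact Prod.ext (Subtype.ext h₁) (Subtype.ext (permConsLast_injective h₂))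
    · obtain ⟨α, β, rfl⟩ := exists_eq_permAppend_permConsLast hp.1 hmax
      obtain ⟨hα, hβ, hb⟩ := avoids231_and_hasULIS_permAppend_permConsLast.mp hp
      exact ⟨⟨⟨α, hα⟩, ⟨β, hβ, hb⟩⟩, rfl⟩
  rw [← Nat.card_congr (Equiv.ofBijective glue hglue), Nat.card_prod]
  congr 1
  split_ifs with hb
  · simp [hb]
  · simp only [hb, ne_eq, not_false_eq_true, and_true]
    rfl

-- Stated for an arbitrary `n` so that `subst` can identify `Fin n` with `Fin (a + (b + 1))`.
theorem card_avoids231_hasULIS_and_symm_eq {n : ℕ} (h : a + (b + 1) = n) :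
    Nat.card {p : Perm (Fin n) //
        (Avoids pattern231 p ∧ HasULIS ⇑p) ∧ (p.symm ⟨a + b, by omega⟩ : ℕ) = a} =
      uNum pattern231 a * if b = 1 then 0 else uNum pattern231 b := by
  subst h
  rw [← card_avoids231_hasULIS_and_apply_natAdd_eq_last]
  refine Nat.card_congr (Equiv.subtypeEquivRight fun p => and_congr_right fun _ => ?_)
  have hlast : (⟨a + b, by omega⟩ : Fin (a + (b + 1))) = Fin.last (a + b) := rfl
  rw [hlast, ← Equiv.eq_symm_apply, Fin.ext_iff, Fin.val_natAdd, Fin.val_zero, add_zero, eq_comm]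

theorem uNum231_succ (m : ℕ) :
    uNum pattern231 (m + 1) = ∑ ab ∈ antidiagonal m,
      uNum pattern231 ab.1 * if ab.2 = 1 then 0 else uNum pattern231 ab.2 := by
  let S := {p : Perm (Fin (m + 1)) // Avoids pattern231 p ∧ HasULIS ⇑p}
  have hfiber (k : Fin (m + 1)) : Nat.card {p : S // p.1.symm (Fin.last m) = k} =
      uNum pattern231 k * if m - k = 1 then 0 else uNum pattern231 (m - k) := by
    rw [← card_avoids231_hasULIS_and_symm_eq (show (k : ℕ) + (m - k + 1) = m + 1 by omega)]
    refine Nat.card_congr ((Equiv.subtypeSubtypeEquivSubtypeInter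
      (fun p : Perm (Fin (m + 1)) => Avoids pattern231 p ∧ HasULIS ⇑p)
      (fun p => p.symm (Fin.last m) = k)).trans
      (Equiv.subtypeEquivRight fun p => and_congr_right fun _ => ?_))
    have hlast : (⟨k + (m - k), by omega⟩ : Fin (m + 1)) = Fin.last m :=
      Fin.ext (by simp; omega)
    rw [hlast, Fin.ext_iff]
  rw [uNum, ← Nat.card_congr (Equiv.sigmaFiberEquiv fun p : S => p.1.symm (Fin.last m)),
    Nat.card_sigma, Nat.sum_antidiagonal_eq_sum_range_succ_mk, ← Fin.sum_univ_eq_sum_range]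
  exact Finset.sum_congr rfl fun k _ => hfiber k

end Counting

theorem uNum_eq_one_of_le_one {k n : ℕ} (q : Perm (Fin k)) (hn : n ≤ 1) (hk : n < k) :
    uNum q n = 1 := by
  have : Subsingleton (Fin n) := Fin.subsingleton_iff_le_one.mpr hn
  have havoids (p : Perm (Fin n)) : Avoids q p := fun ⟨f, hf, _⟩ => by
    have := Fintype.card_le_of_injective f hf.injective
    simp only [Fintype.card_fin] at this
    omega
  rw [uNum, Nat.card_eq_one_iff_unique]
  exact ⟨⟨fun p p' => Subtype.ext (Equiv.ext fun _ => Subsingleton.elim _ _)⟩,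
    ⟨⟨1, havoids 1, hasULIS_of_subsingleton _⟩⟩⟩

theorem uNum231_zero : uNum pattern231 0 = 1 :=
  uNum_eq_one_of_le_one _ zero_le_one (by omega)

theorem uNum231_one : uNum pattern231 1 = 1 :=
  uNum_eq_one_of_le_one _ le_rfl (by omega)

theorem uNum231_add_two_add_uNum231 (m : ℕ) :
    uNum pattern231 (m + 2) + uNum pattern231 m =
      ∑ ab ∈ antidiagonal (m + 1), uNum pattern231 ab.1 * uNum pattern231 ab.2 := by
  have hsplit (ab : ℕ × ℕ) : uNum pattern231 ab.1 * uNum pattern231 ab.2 =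
      (uNum pattern231 ab.1 * if ab.2 = 1 then 0 else uNum pattern231 ab.2) +
        if ab.2 = 1 then uNum pattern231 ab.1 else 0 := by
    split_ifs with h <;> simp [h, uNum231_one]
  rw [sum_congr rfl fun ab _ => hsplit ab, sum_add_distrib, ← uNum231_succ,
    sum_eq_single (m, 1) (fun ab hab hne => if_neg ?_) (by simp)]
  · simp
  · rw [HasAntidiagonal.mem_antidiagonal] at hab
    exact fun h => hne (Prod.ext (by omega) h)

/-- `u_0(231) = u_1(231) = 1` and, for `n ≥ 2`,
`u_n(231) = (Σ_{a+b=n-1} u_a(231)·u_b(231)) − u_{n−2}(231)` (stated additively);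
equivalently, the generating function `U` satisfies `U = z·U·(U − z) + 1`. -/
theorem u231_recurrence :
    uNum pattern231 0 = 1 ∧ uNum pattern231 1 = 1 ∧
    (∀ n : ℕ, 2 ≤ n →
      uNum pattern231 n + uNum pattern231 (n - 2)
        = ∑ ab ∈ Finset.HasAntidiagonal.antidiagonal (n - 1), uNum pattern231 ab.1 * uNum pattern231 ab.2) ∧
    PowerSeries.mk (fun n => (uNum pattern231 n : ℚ))
      = PowerSeries.X * PowerSeries.mk (fun n => (uNum pattern231 n : ℚ)) *
          (PowerSeries.mk (fun n => (uNum pattern231 n : ℚ)) - PowerSeries.X) + 1 := by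
  refine ⟨uNum231_zero, uNum231_one, fun n hn => ?_, ?_⟩
  · obtain ⟨m, rfl⟩ : ∃ m, n = m + 2 := ⟨n - 2, by omega⟩
    exact uNum231_add_two_add_uNum231 m
  have hsub : PowerSeries.mk (fun n => (uNum pattern231 n : ℚ)) - PowerSeries.X =
      PowerSeries.mk fun b => ((if b = 1 then 0 else uNum pattern231 b : ℕ) : ℚ) := by
    ext b
    by_cases hb : b = 1 <;> simp [PowerSeries.coeff_X, hb, uNum231_one]
  ext (_ | n)
  · simp [uNum231_zero]
  · rw [mul_assoc, hsub, map_add, PowerSeries.coeff_succ_X_mul, PowerSeries.coeff_mul,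
      PowerSeries.coeff_mk, uNum231_succ]
    simp
end

section
/- For every nonnegative integer m, the number of 321-avoiding permutations of length 2m+1 that have a unique longest increasing subsequence is at least C_m², where C_m = binomial(2m,m)/(m+1) is the m-th Catalan number. -/
open Finset

section helpers

/-- A downward-closed finset of `Fin k` is an initial segment. -/
lemma lower_mem_iff {k : ℕ} (T : Finset (Fin k))
    (hT : ∀ ⦃a b : Fin k⦄, a ≤ b → b ∈ T → a ∈ T) (i : Fin k) :
    i ∈ T ↔ (i : ℕ) < T.card := by
  constructor
  · intro hi
    have h1 : Finset.Iic i ⊆ T := fun a ha => hT (Finset.mem_Iic.mp ha) hi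
    have := Finset.card_le_card h1
    rw [Fin.card_Iic] at this
    omega
  · intro hi
    by_contra hni
    have h1 : T ⊆ Finset.Iio i := by
      intro b hb
      rw [Finset.mem_Iio]
      rcases lt_or_ge b i with h | h
      · exact h
      · exact absurd (hT h hb) hni
    have := Finset.card_le_card h1
    rw [Fin.card_Iio] at this
    omega

/-- For a strictly monotone `g : Fin k → Fin N`, `g i < z` iff `i` is less than the
number of elements of the range of `g` below `z`. -/
lemma strictMono_lt_iff_card {k N : ℕ} (g : Fin k → Fin N) (hg : StrictMono g) (z : Fin N)
    (i : Fin k) :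
    g i < z ↔ (i : ℕ) < ((Finset.univ.image g).filter (· < z)).card := by
  have key : ((Finset.univ.image g).filter (· < z)).card
      = (Finset.univ.filter (fun t : Fin k => g t < z)).card := by
    rw [Finset.filter_image]
    exact (Finset.card_image_of_injective _ hg.injective)
  rw [key]
  have hlow : ∀ ⦃a b : Fin k⦄, a ≤ b → b ∈ Finset.univ.filter (fun t : Fin k => g t < z) →
      a ∈ Finset.univ.filter (fun t : Fin k => g t < z) := fun a b hab hb => by
    simp only [Finset.mem_filter, Finset.mem_univ, true_and] at *
    exact lt_of_le_of_lt (hg.monotone hab) hb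
  have := lower_mem_iff _ hlow i
  simpa using this

end helpers

section construction

variable {m : ℕ} (q : Fin m → Fin (2*m+1))

def Bpos : Finset (Fin (2*m+1)) := Finset.univ.image q

lemma card_Apos (hq : Function.Injective q) : (Bpos q)ᶜ.card = m + 1 := by
  have h1 : (Bpos q).card = m := by
    rw [Bpos, Finset.card_image_of_injective _ hq, Finset.card_univ, Fintype.card_fin]
  rw [Finset.card_compl, h1, Fintype.card_fin]
  omega

/-- Enumeration of the complement of the range of `q`. -/
def aq (hq : Function.Injective q) : Fin (m+1) → Fin (2*m+1) :=
  (Bpos q)ᶜ.orderEmbOfFin (card_Apos q hq)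

lemma aq_strictMono (hq : Function.Injective q) : StrictMono (aq q hq) :=
  ((Bpos q)ᶜ.orderEmbOfFin (card_Apos q hq)).strictMono

lemma aq_mem (hq : Function.Injective q) (i : Fin (m+1)) : aq q hq i ∈ (Bpos q)ᶜ :=
  Finset.orderEmbOfFin_mem _ _ _

def EP (hq : Function.Injective q) : Fin m ⊕ Fin (m+1) → Fin (2*m+1) :=
  Sum.elim q (aq q hq)

lemma EP_bij (hq : Function.Injective q) : Function.Bijective (EP q hq) := by
  rw [Fintype.bijective_iff_injective_and_card]
  refine ⟨?_, by simp; omega⟩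
  intro a b hab
  rcases a with a | a <;> rcases b with b | b
  · exact congrArg (Sum.inl : Fin m → Fin m ⊕ Fin (m+1)) (hq hab)
  · exfalso
    simp only [EP, Sum.elim_inl, Sum.elim_inr] at hab
    have := aq_mem q hq b
    rw [← hab] at this
    simp [Bpos] at this
  · exfalso
    simp only [EP, Sum.elim_inl, Sum.elim_inr] at hab
    have := aq_mem q hq a
    rw [hab] at this
    simp [Bpos] at this
  · simp only [EP, Sum.elim_inr] at hab
    exact congrArg (Sum.inr : Fin (m+1) → Fin m ⊕ Fin (m+1)) ((aq_strictMono q hq).injective hab)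

/-- The equivalence `Fin m ⊕ Fin (m+1) ≃ Fin (2m+1)` given by `q` on the left
and the complement enumeration on the right. -/
noncomputable def EPe (hq : Function.Injective q) : (Fin m ⊕ Fin (m+1)) ≃ Fin (2*m+1) :=
  Equiv.ofBijective _ (EP_bij q hq)

lemma EPe_symm_q (hq : Function.Injective q) (j : Fin m) :
    (EPe q hq).symm (q j) = Sum.inl j := by
  rw [Equiv.symm_apply_eq]; rfl

lemma EPe_symm_aq (hq : Function.Injective q) (i : Fin (m+1)) :
    (EPe q hq).symm (aq q hq i) = Sum.inr i := by
  rw [Equiv.symm_apply_eq]; rfl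

lemma pos_cases (hq : Function.Injective q) (i : Fin (2*m+1)) :
    (∃ j, i = q j) ∨ (∃ i₀, i = aq q hq i₀) := by
  rcases (EP_bij q hq).surjective i with ⟨a | a, ha⟩
  · exact Or.inl ⟨a, ha.symm⟩
  · exact Or.inr ⟨a, ha.symm⟩

end construction

section construction2

variable {m : ℕ} (q : Fin m → Fin (2*m+1))

lemma image_aq (hq : Function.Injective q) :
    Finset.univ.image (aq q hq) = (Bpos q)ᶜ := by
  apply Finset.eq_of_subset_of_card_le
  · intro x hx
    rcases Finset.mem_image.mp hx with ⟨i, -, rfl⟩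
    exact aq_mem q hq i
  · rw [card_Apos q hq, Finset.card_image_of_injective _ (aq_strictMono q hq).injective]
    simp

lemma card_univ_filter_lt (z : Fin (2*m+1)) :
    (Finset.univ.filter (· < z)).card = (z : ℕ) := by
  have : Finset.univ.filter (· < z) = Finset.Iio z := by
    ext x; simp [Finset.mem_Iio]
  rw [this, Fin.card_Iio]

lemma card_Bpos_filter_lt (hq : StrictMono q) (j : Fin m) :
    ((Bpos q).filter (· < q j)).card = (j : ℕ) := by
  rw [Bpos, Finset.filter_image, Finset.card_image_of_injective _ hq.injective]
  have : Finset.univ.filter (fun t : Fin m => q t < q j) = Finset.Iio j := by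
    ext t; simp [Finset.mem_Iio, hq.lt_iff_lt]
  rw [this, Fin.card_Iio]

lemma card_Apos_filter_lt (hq : StrictMono q) (j : Fin m) :
    (((Bpos q)ᶜ).filter (· < q j)).card = (q j : ℕ) - (j : ℕ) := by
  have hsplit : ((Bpos q).filter (· < q j)).card + (((Bpos q)ᶜ).filter (· < q j)).card
      = (Finset.univ.filter (· < q j)).card := by
    rw [← Finset.card_union_of_disjoint]
    · rw [← Finset.filter_union, Finset.union_compl]
    · exact Finset.disjoint_filter_filter (disjoint_compl_right)
  rw [card_Bpos_filter_lt q hq, card_univ_filter_lt] at hsplit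
  omega

end construction2

section mainconstruction

variable {m : ℕ} (q w : Fin m → Fin (2*m+1))
  (hq : StrictMono q) (hw : StrictMono w)

/-- The permutation built from position data `q` and value data `w`. -/
noncomputable def mperm : Equiv.Perm (Fin (2*m+1)) :=
  (EPe q hq.injective).symm.trans (EPe w hw.injective)

lemma mperm_q (j : Fin m) : mperm q w hq hw (q j) = w j := by
  simp only [mperm, Equiv.trans_apply, EPe_symm_q]
  rfl

lemma mperm_aq (i : Fin (m+1)) :
    mperm q w hq hw (aq q hq.injective i) = aq w hw.injective i := by
  simp only [mperm, Equiv.trans_apply, EPe_symm_aq]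
  rfl

/-- Potential function: B-elements (range of `q`) get odd values `2j+1`,
A-elements get even values `2i`. -/
noncomputable def phi : Fin (2*m+1) → ℕ :=
  fun i => Sum.elim (fun j : Fin m => 2*(j:ℕ)+1) (fun i₀ : Fin (m+1) => 2*(i₀:ℕ))
    ((EPe q hq.injective).symm i)

lemma phi_q (j : Fin m) : phi q hq (q j) = 2*(j:ℕ)+1 := by
  simp [phi, EPe_symm_q]

lemma phi_aq (i : Fin (m+1)) : phi q hq (aq q hq.injective i) = 2*(i:ℕ) := by
  simp [phi, EPe_symm_aq]

lemma phi_le (i : Fin (2*m+1)) : phi q hq i ≤ 2*m := by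
  rcases pos_cases q hq.injective i with ⟨j, rfl⟩ | ⟨i₀, rfl⟩
  · rw [phi_q]; have := j.isLt; omega
  · rw [phi_aq]; have := i₀.isLt; omega

variable (hq2 : ∀ j, (q j : ℕ) ≤ 2*(j:ℕ)) (hw2 : ∀ j : Fin m, 2*(j:ℕ)+2 ≤ (w j : ℕ))

include hq2 hw2 in
lemma phi_step {i i' : Fin (2*m+1)} (hlt : i < i')
    (hp : mperm q w hq hw i < mperm q w hq hw i') :
    phi q hq i + 2 ≤ phi q hq i' := by
  rcases pos_cases q hq.injective i with ⟨j, rfl⟩ | ⟨i₀, rfl⟩ <;>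
    rcases pos_cases q hq.injective i' with ⟨j', rfl⟩ | ⟨i₁, rfl⟩
  · -- q j < q j'
    rw [phi_q, phi_q]
    have : j < j' := hq.lt_iff_lt.mp hlt
    have : (j:ℕ) < (j':ℕ) := this
    omega
  · -- q j before aq i₁ : use values
    rw [phi_q, phi_aq]
    rw [mperm_q, mperm_aq] at hp
    -- w j < aw i₁ forces i₁ ≥ (w j) - j ≥ j + 2
    have hcard : (((Bpos w)ᶜ).filter (· < w j)).card = (w j : ℕ) - (j : ℕ) :=
      card_Apos_filter_lt w hw j
    have hnot : ¬ (aq w hw.injective i₁ < w j) := by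
      intro hcon
      exact absurd (hcon.trans hp) (lt_irrefl _)
    rw [strictMono_lt_iff_card _ (aq_strictMono w hw.injective), image_aq w hw.injective,
      hcard] at hnot
    have h2 := hw2 j
    have h3 := (w j).isLt
    omega
  · -- aq i₀ before q j' : use positions
    rw [phi_aq, phi_q]
    have h1 : (i₀ : ℕ) < (((Bpos q)ᶜ).filter (· < q j')).card := by
      rw [← image_aq q hq.injective]
      exact (strictMono_lt_iff_card _ (aq_strictMono q hq.injective) _ _).mp hlt
    rw [card_Apos_filter_lt q hq] at h1
    have := hq2 j'
    omega
  · -- aq i₀ < aq i₁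
    rw [phi_aq, phi_aq]
    have : i₀ < i₁ := (aq_strictMono q hq.injective).lt_iff_lt.mp hlt
    have : (i₀:ℕ) < (i₁:ℕ) := this
    omega

end mainconstruction

section chains

variable {m : ℕ} (q w : Fin m → Fin (2*m+1))
  (hq : StrictMono q) (hw : StrictMono w)
  (hq2 : ∀ j, (q j : ℕ) ≤ 2*(j:ℕ)) (hw2 : ∀ j : Fin m, 2*(j:ℕ)+2 ≤ (w j : ℕ))

include hq2 hw2 in
lemma chain_phi (t : Finset (Fin (2*m+1))) (ht : IsIncSubseq (⇑(mperm q w hq hw)) t)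
    (l : ℕ) (hl : l < t.card) :
    2*l ≤ phi q hq ((t.orderIsoOfFin rfl ⟨l, hl⟩ : {x // x ∈ t}) : Fin (2*m+1)) := by
  induction l with
  | zero => omega
  | succ l ih =>
    have hl' : l < t.card := by omega
    have e1 := ih hl'
    set e := t.orderIsoOfFin (rfl : t.card = t.card)
    have hlt : (e ⟨l, hl'⟩ : Fin (2*m+1)) < (e ⟨l+1, hl⟩ : Fin (2*m+1)) := by
      have : (⟨l, hl'⟩ : Fin t.card) < ⟨l+1, hl⟩ := by simp [Fin.lt_def]
      exact_mod_cast e.strictMono this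
    have hmem1 : ((e ⟨l, hl'⟩ : {x // x ∈ t}) : Fin (2*m+1)) ∈ t := (e ⟨l, hl'⟩).2
    have hmem2 : ((e ⟨l+1, hl⟩ : {x // x ∈ t}) : Fin (2*m+1)) ∈ t := (e ⟨l+1, hl⟩).2
    have hp := ht _ hmem1 _ hmem2 hlt
    have := phi_step q w hq hw hq2 hw2 hlt hp
    omega

include hq2 hw2 in
lemma chain_card_le (t : Finset (Fin (2*m+1))) (ht : IsIncSubseq (⇑(mperm q w hq hw)) t) :
    t.card ≤ m + 1 := by
  rcases Nat.eq_zero_or_pos t.card with h | h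
  · omega
  · have hl : t.card - 1 < t.card := by omega
    have := chain_phi q w hq hw hq2 hw2 t ht (t.card - 1) hl
    have := phi_le q hq ((t.orderIsoOfFin rfl ⟨t.card - 1, hl⟩ : {x // x ∈ t}) : Fin (2*m+1))
    omega

include hq2 hw2 in
lemma chain_card_le_of_B (t : Finset (Fin (2*m+1))) (ht : IsIncSubseq (⇑(mperm q w hq hw)) t)
    (j : Fin m) (hjt : q j ∈ t) : t.card ≤ m := by
  set e := t.orderIsoOfFin (rfl : t.card = t.card) with he
  set l₀ : Fin t.card := e.symm ⟨q j, hjt⟩ with hl₀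
  have hbase : 2*(l₀:ℕ)+1 ≤ phi q hq ((e l₀ : {x // x ∈ t}) : Fin (2*m+1)) := by
    have h1 := chain_phi q w hq hw hq2 hw2 t ht (l₀ : ℕ) l₀.isLt
    have h2 : ((e l₀ : {x // x ∈ t}) : Fin (2*m+1)) = q j := by
      rw [hl₀]; simp
    rw [h2] at h1 ⊢
    rw [phi_q]
    rw [phi_q] at h1
    · omega
  have key : ∀ d : ℕ, (hl : (l₀:ℕ) + d < t.card) →
      2*((l₀:ℕ)+d)+1 ≤ phi q hq ((e ⟨(l₀:ℕ)+d, hl⟩ : {x // x ∈ t}) : Fin (2*m+1)) := by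
    intro d
    induction d with
    | zero =>
      intro hl
      have : (⟨(l₀:ℕ)+0, hl⟩ : Fin t.card) = l₀ := by ext; simp
      rw [this]
      simpa using hbase
    | succ d ih =>
      intro hl
      have hl' : (l₀:ℕ) + d < t.card := by omega
      have e1 := ih hl'
      have hlt : (e ⟨(l₀:ℕ)+d, hl'⟩ : Fin (2*m+1)) < (e ⟨(l₀:ℕ)+d+1, hl⟩ : Fin (2*m+1)) := by
        have : (⟨(l₀:ℕ)+d, hl'⟩ : Fin t.card) < ⟨(l₀:ℕ)+d+1, hl⟩ := by simp [Fin.lt_def]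
        exact_mod_cast e.strictMono this
      have hp := ht _ (e ⟨(l₀:ℕ)+d, hl'⟩).2 _ (e ⟨(l₀:ℕ)+d+1, hl⟩).2 hlt
      have := phi_step q w hq hw hq2 hw2 hlt hp
      have harg : (⟨(l₀:ℕ)+(d+1), hl⟩ : Fin t.card) = ⟨(l₀:ℕ)+d+1, hl⟩ := rfl
      rw [harg]
      omega
  have hfin : (l₀:ℕ) ≤ t.card - 1 := by have := l₀.isLt; omega
  have hl : (l₀:ℕ) + (t.card - 1 - (l₀:ℕ)) < t.card := by have := l₀.isLt; omega
  have h1 := key (t.card - 1 - (l₀:ℕ)) hl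
  have h2 := phi_le q hq ((e ⟨(l₀:ℕ)+(t.card - 1 - (l₀:ℕ)), hl⟩ : {x // x ∈ t}) : Fin (2*m+1))
  have := l₀.isLt
  omega

end chains

section properties

variable {m : ℕ} (q w : Fin m → Fin (2*m+1))
  (hq : StrictMono q) (hw : StrictMono w)
  (hq2 : ∀ j, (q j : ℕ) ≤ 2*(j:ℕ)) (hw2 : ∀ j : Fin m, 2*(j:ℕ)+2 ≤ (w j : ℕ))

lemma mem_compl_eq_aq (i : Fin (2*m+1)) (hi : i ∈ (Bpos q)ᶜ) :
    ∃ i₀, i = aq q hq.injective i₀ := by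
  rw [← image_aq q hq.injective] at hi
  rcases Finset.mem_image.mp hi with ⟨i₀, -, rfl⟩
  exact ⟨i₀, rfl⟩

lemma inc_Apos : IsIncSubseq (⇑(mperm q w hq hw)) ((Bpos q)ᶜ) := by
  intro i hi i' hi' hlt
  obtain ⟨i₀, rfl⟩ := mem_compl_eq_aq q hq i hi
  obtain ⟨i₁, rfl⟩ := mem_compl_eq_aq q hq i' hi'
  rw [mperm_aq, mperm_aq]
  exact (aq_strictMono w hw.injective) ((aq_strictMono q hq.injective).lt_iff_lt.mp hlt)

include hq2 hw2 in
lemma hasULIS_mperm : HasULIS (⇑(mperm q w hq hw)) := by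
  refine ⟨(Bpos q)ᶜ, ⟨inc_Apos q w hq hw, ?_⟩, ?_⟩
  · intro t ht
    rw [card_Apos q hq.injective]
    exact chain_card_le q w hq hw hq2 hw2 t ht
  · rintro s' ⟨hs'inc, hs'max⟩
    have hcard1 : m + 1 ≤ s'.card := by
      have := hs'max ((Bpos q)ᶜ) (inc_Apos q w hq hw)
      rw [card_Apos q hq.injective] at this
      exact this
    have hsub : s' ⊆ (Bpos q)ᶜ := by
      intro i hi
      rw [Finset.mem_compl]
      intro hiB
      rcases Finset.mem_image.mp hiB with ⟨j, -, rfl⟩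
      have := chain_card_le_of_B q w hq hw hq2 hw2 s' hs'inc j hi
      omega
    apply Finset.eq_of_subset_of_card_le hsub
    rw [card_Apos q hq.injective]
    exact hcard1

lemma same_class_mono (i i' : Fin (2*m+1)) (hlt : i < i')
    (hcls : ((EPe q hq.injective).symm i).isLeft = ((EPe q hq.injective).symm i').isLeft) :
    mperm q w hq hw i < mperm q w hq hw i' := by
  rcases pos_cases q hq.injective i with ⟨j, rfl⟩ | ⟨i₀, rfl⟩ <;>
    rcases pos_cases q hq.injective i' with ⟨j', rfl⟩ | ⟨i₁, rfl⟩
  · rw [mperm_q, mperm_q]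
    exact hw (hq.lt_iff_lt.mp hlt)
  · rw [EPe_symm_q, EPe_symm_aq] at hcls
    simp at hcls
  · rw [EPe_symm_q, EPe_symm_aq] at hcls
    simp at hcls
  · rw [mperm_aq, mperm_aq]
    exact (aq_strictMono w hw.injective) ((aq_strictMono q hq.injective).lt_iff_lt.mp hlt)

lemma avoids_mperm : Avoids pattern321 (mperm q w hq hw) := by
  rintro ⟨f, hf, hpat⟩
  have h01 : f 0 < f 1 := hf (by decide)
  have h12 : f 1 < f 2 := hf (by decide)
  have h02 : f 0 < f 2 := hf (by decide)
  have p10 : mperm q w hq hw (f 1) < mperm q w hq hw (f 0) := (hpat 1 0).mpr (by decide)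
  have p21 : mperm q w hq hw (f 2) < mperm q w hq hw (f 1) := (hpat 2 1).mpr (by decide)
  have p20 : mperm q w hq hw (f 2) < mperm q w hq hw (f 0) := (hpat 2 0).mpr (by decide)
  have tri : ∀ a b c : Bool, a = b ∨ b = c ∨ a = c := by decide
  set cls : Fin (2*m+1) → Bool := fun i => ((EPe q hq.injective).symm i).isLeft with hcls
  rcases tri (cls (f 0)) (cls (f 1)) (cls (f 2)) with h | h | h
  · exact absurd (same_class_mono q w hq hw (f 0) (f 1) h01 h) (not_lt.mpr p10.le)
  · exact absurd (same_class_mono q w hq hw (f 1) (f 2) h12 h) (not_lt.mpr p21.le)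
  · exact absurd (same_class_mono q w hq hw (f 0) (f 2) h02 h) (not_lt.mpr p20.le)

end properties

section dyck

open DyckStep

lemma image_orderEmbOfFin {α : Type*} [LinearOrder α] (s : Finset α) {k : ℕ} (h : s.card = k) :
    Finset.univ.image (s.orderEmbOfFin h) = s := by
  apply Finset.eq_of_subset_of_card_le
  · intro x hx
    rcases Finset.mem_image.mp hx with ⟨i, -, rfl⟩
    exact Finset.orderEmbOfFin_mem s h i
  · rw [Finset.card_image_of_injective _ (s.orderEmbOfFin h).injective, Finset.card_univ,
      Fintype.card_fin, h]

lemma card_filter_lt_orderEmbOfFin {α : Type*} [LinearOrder α] [DecidableEq α] (s : Finset α)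
    {k : ℕ} (h : s.card = k) (j : Fin k) :
    (s.filter (· < s.orderEmbOfFin h j)).card = (j : ℕ) := by
  have hs : s.filter (· < s.orderEmbOfFin h j) = Finset.image (s.orderEmbOfFin h) (Finset.Iio j) := by
    ext x
    simp only [Finset.mem_filter, Finset.mem_image, Finset.mem_Iio]
    constructor
    · rintro ⟨hxs, hxlt⟩
      have : x ∈ Set.range (s.orderEmbOfFin h) := by
        rw [Finset.range_orderEmbOfFin]; exact hxs
      rcases this with ⟨t, rfl⟩
      exact ⟨t, (s.orderEmbOfFin h).strictMono.lt_iff_lt.mp hxlt, rfl⟩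
    · rintro ⟨t, ht, rfl⟩
      exact ⟨Finset.orderEmbOfFin_mem s h t, (s.orderEmbOfFin h).strictMono ht⟩
  rw [hs, Finset.card_image_of_injective _ (s.orderEmbOfFin h).injective, Fin.card_Iio]

lemma count_take_eq (l : List DyckStep) (i : ℕ) :
    (l.take i).count U = ((Finset.range i).filter (fun t => l.getD t D = U)).card := by
  induction i with
  | zero => simp
  | succ i ih =>
    rw [Finset.range_add_one, Finset.filter_insert]
    rcases lt_or_ge i l.length with hi | hi
    · have hget : l[i]? = some l[i] := List.getElem?_eq_getElem hi
      have hgetD : l.getD i D = l[i] := by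
        rw [List.getD_eq_getElem?_getD, hget]
        rfl
      rw [List.take_succ, List.count_append, ih, hgetD]
      by_cases hU : l[i] = U
      · rw [if_pos hU, Finset.card_insert_of_notMem (by simp)]
        simp [hget, hU]
      · rw [if_neg hU]
        simp [hget, List.count_singleton', hU]
    · have h1 : l.take (i+1) = l.take i := by
        rw [List.take_of_length_le hi, List.take_of_length_le (by omega)]
      have h2 : l.getD i D = D := List.getD_eq_default _ _ hi
      rw [if_neg (by rw [h2]; simp), h1, ih]

lemma count_UD (l : List DyckStep) : l.count U + l.count D = l.length := by
  induction l with
  | nil => simp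
  | cons a l ih =>
    cases a <;> simp [List.count_cons] <;> omega

end dyck

section dyckq

open DyckStep

variable (m : ℕ) (d : DyckWord)

def Tpos : Finset ℕ := (Finset.range (2*m)).filter (fun t => d.toList.getD t D = U)

lemma dyck_len (hd : d.semilength = m) : d.toList.length = 2*m := by
  rw [← d.two_mul_semilength_eq_length, hd]

lemma Tpos_card (hd : d.semilength = m) : (Tpos m d).card = m := by
  have h1 := count_take_eq d.toList (2*m)
  rw [List.take_of_length_le (by rw [dyck_len m d hd])] at h1
  have h2 : d.toList.count U = m := hd
  rw [h2] at h1
  rw [Tpos, ← h1]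

/-- The `j`-th `U`-position of a Dyck word of semilength `m`. -/
def qd (hd : d.semilength = m) : Fin m → ℕ := (Tpos m d).orderEmbOfFin (Tpos_card m d hd)

lemma qd_strictMono (hd : d.semilength = m) : StrictMono (qd m d hd) :=
  ((Tpos m d).orderEmbOfFin (Tpos_card m d hd)).strictMono

lemma qd_mem (hd : d.semilength = m) (j : Fin m) : qd m d hd j ∈ Tpos m d :=
  Finset.orderEmbOfFin_mem _ _ _

lemma qd_lt (hd : d.semilength = m) (j : Fin m) : qd m d hd j < 2*m := by
  have := qd_mem m d hd j
  rw [Tpos, Finset.mem_filter, Finset.mem_range] at this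
  exact this.1

lemma qd_le (hd : d.semilength = m) (j : Fin m) : qd m d hd j ≤ 2*(j:ℕ) := by
  set i := qd m d hd j with hi
  have hiT := qd_mem m d hd j
  have hilt : i < 2*m := qd_lt m d hd j
  have hfeq : (Finset.range i).filter (fun t => d.toList.getD t D = U)
      = (Tpos m d).filter (· < i) := by
    ext t
    simp only [Finset.mem_filter, Finset.mem_range, Tpos]
    constructor
    · rintro ⟨h1, h2⟩
      exact ⟨⟨by omega, h2⟩, h1⟩
    · rintro ⟨⟨h1, h2⟩, h3⟩
      exact ⟨h3, h2⟩
  have hcU : (d.toList.take i).count U = (j : ℕ) := by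
    rw [count_take_eq, hfeq, hi, qd, card_filter_lt_orderEmbOfFin]
  have hcD : (d.toList.take i).count D ≤ (j : ℕ) := by
    rw [← hcU]; exact d.count_D_le_count_U i
  have hlen : (d.toList.take i).length = i := by
    rw [List.length_take, dyck_len m d hd]
    omega
  have := count_UD (d.toList.take i)
  omega

lemma qd_inj (d' : DyckWord) (hd : d.semilength = m) (hd' : d'.semilength = m)
    (h : qd m d hd = qd m d' hd') : d = d' := by
  have hT : Tpos m d = Tpos m d' := by
    have h1 : ((Tpos m d : Finset ℕ) : Set ℕ) = ((Tpos m d' : Finset ℕ) : Set ℕ) := by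
      rw [← Finset.range_orderEmbOfFin (Tpos m d) (Tpos_card m d hd),
        ← Finset.range_orderEmbOfFin (Tpos m d') (Tpos_card m d' hd')]
      show Set.range (qd m d hd) = Set.range (qd m d' hd')
      rw [h]
    exact_mod_cast Finset.coe_inj.mp h1
  have hlen : d.toList.length = d'.toList.length := by
    rw [dyck_len m d hd, dyck_len m d' hd']
  have hlist : d.toList = d'.toList := by
    apply List.ext_getElem hlen
    intro t ht1 ht2
    have htlt : t < 2*m := by rw [← dyck_len m d hd]; exact ht1
    have key : ∀ (e : DyckWord) (he : e.semilength = m) (hte : t < e.toList.length),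
        e.toList[t] = U ↔ t ∈ Tpos m e := by
      intro e he hte
      rw [Tpos, Finset.mem_filter, Finset.mem_range]
      have : e.toList.getD t D = e.toList[t] := by
        rw [List.getD_eq_getElem?_getD, List.getElem?_eq_getElem hte]
        rfl
      rw [this]
      constructor
      · intro hU
        exact ⟨by rw [← dyck_len m e he]; exact hte, hU⟩
      · exact fun h => h.2
    rcases (d.toList[t]).dichotomy with h1 | h1 <;> rcases (d'.toList[t]).dichotomy with h2 | h2
    · rw [h1, h2]
    · exfalso
      have := (key d hd ht1).mp h1
      rw [hT] at this
      have := (key d' hd' ht2).mpr this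
      rw [h2] at this
      exact absurd this (by simp)
    · exfalso
      have := (key d' hd' ht2).mp h2
      rw [← hT] at this
      have := (key d hd ht1).mpr this
      rw [h1] at this
      exact absurd this (by simp)
    · rw [h1, h2]
  exact DyckWord.ext hlist

end dyckq

section inj

variable {m : ℕ} (q w : Fin m → Fin (2*m+1))
  (hq : StrictMono q) (hw : StrictMono w)
  (hq2 : ∀ j, (q j : ℕ) ≤ 2*(j:ℕ)) (hw2 : ∀ j : Fin m, 2*(j:ℕ)+2 ≤ (w j : ℕ))

include hq2 hw2 in
lemma witness_prop : IsIncSubseq (⇑(mperm q w hq hw)) ((Bpos q)ᶜ) ∧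
    ∀ t, IsIncSubseq (⇑(mperm q w hq hw)) t → t.card ≤ ((Bpos q)ᶜ).card := by
  refine ⟨inc_Apos q w hq hw, fun t ht => ?_⟩
  rw [card_Apos q hq.injective]
  exact chain_card_le q w hq hw hq2 hw2 t ht

variable (q' w' : Fin m → Fin (2*m+1))
  (hq' : StrictMono q') (hw' : StrictMono w')
  (hq2' : ∀ j, (q' j : ℕ) ≤ 2*(j:ℕ)) (hw2' : ∀ j : Fin m, 2*(j:ℕ)+2 ≤ (w' j : ℕ))

include hq2 hw2 hq2' hw2' in
lemma mperm_inj (h : mperm q w hq hw = mperm q' w' hq' hw') : q = q' ∧ w = w' := by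
  obtain ⟨s, hs, hu⟩ := hasULIS_mperm q w hq hw hq2 hw2
  have e1 : (Bpos q)ᶜ = s := hu _ (witness_prop q w hq hw hq2 hw2)
  have w2' := witness_prop q' w' hq' hw' hq2' hw2'
  rw [← h] at w2'
  have e2 : (Bpos q')ᶜ = s := hu _ w2'
  have eB : Bpos q = Bpos q' := by
    have := e1.trans e2.symm
    exact compl_injective this
  have hcard : (Bpos q).card = m := by
    rw [Bpos, Finset.card_image_of_injective _ hq.injective, Finset.card_univ, Fintype.card_fin]
  have hqq : q = q' := by
    have h1 : q = (Bpos q).orderEmbOfFin hcard :=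
      Finset.orderEmbOfFin_unique hcard
        (fun x => Finset.mem_image_of_mem q (Finset.mem_univ x)) hq
    have h2 : q' = (Bpos q).orderEmbOfFin hcard :=
      Finset.orderEmbOfFin_unique hcard
        (fun x => by rw [eB]; exact Finset.mem_image_of_mem q' (Finset.mem_univ x)) hq'
    rw [h1, h2]
  refine ⟨hqq, ?_⟩
  funext j
  have h1 : mperm q w hq hw (q j) = w j := mperm_q q w hq hw j
  have h2 : mperm q' w' hq' hw' (q' j) = w' j := mperm_q q' w' hq' hw' j
  have hqj : q j = q' j := congrFun hqq j
  calc w j = mperm q w hq hw (q j) := h1.symm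
    _ = mperm q' w' hq' hw' (q' j) := by rw [h, hqj]
    _ = w' j := h2

end inj

section final

open DyckStep

variable (m : ℕ)

lemma rev_lt (j : Fin m) : m - 1 - (j:ℕ) < m := by
  have := j.isLt; omega

def qfin (d : DyckWord) (hd : d.semilength = m) : Fin m → Fin (2*m+1) :=
  fun j => ⟨qd m d hd j, by have := qd_lt m d hd j; omega⟩

lemma qfin_strictMono (d : DyckWord) (hd : d.semilength = m) : StrictMono (qfin m d hd) := by
  intro a b hab
  simp only [qfin, Fin.mk_lt_mk]
  exact qd_strictMono m d hd hab

lemma qfin_le (d : DyckWord) (hd : d.semilength = m) (j : Fin m) :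
    ((qfin m d hd j : Fin (2*m+1)) : ℕ) ≤ 2*(j:ℕ) := qd_le m d hd j

def wfin (d : DyckWord) (hd : d.semilength = m) : Fin m → Fin (2*m+1) :=
  fun j => ⟨2*m - qd m d hd ⟨m - 1 - (j:ℕ), rev_lt m j⟩, by omega⟩

lemma wfin_strictMono (d : DyckWord) (hd : d.semilength = m) : StrictMono (wfin m d hd) := by
  intro a b hab
  simp only [wfin, Fin.mk_lt_mk]
  have hra : (⟨m - 1 - (b:ℕ), rev_lt m b⟩ : Fin m) < ⟨m - 1 - (a:ℕ), rev_lt m a⟩ := by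
    have ha := a.isLt; have hb := b.isLt
    have : (a:ℕ) < (b:ℕ) := hab
    simp only [Fin.mk_lt_mk]
    omega
  have h1 := qd_strictMono m d hd hra
  have h2 := qd_le m d hd ⟨m - 1 - (a:ℕ), rev_lt m a⟩
  simp only at h2
  omega

lemma wfin_ge (d : DyckWord) (hd : d.semilength = m) (j : Fin m) :
    2*(j:ℕ)+2 ≤ ((wfin m d hd j : Fin (2*m+1)) : ℕ) := by
  have h2 := qd_le m d hd ⟨m - 1 - (j:ℕ), rev_lt m j⟩
  simp only at h2
  show 2*(j:ℕ)+2 ≤ 2*m - qd m d hd ⟨m - 1 - (j:ℕ), rev_lt m j⟩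
  have := j.isLt
  omega

lemma qfin_inj (d d' : DyckWord) (hd : d.semilength = m) (hd' : d'.semilength = m)
    (h : qfin m d hd = qfin m d' hd') : d = d' := by
  apply qd_inj m d d' hd hd'
  funext j
  have := congrFun h j
  simpa [qfin, Fin.ext_iff] using this

lemma wfin_inj (d d' : DyckWord) (hd : d.semilength = m) (hd' : d'.semilength = m)
    (h : wfin m d hd = wfin m d' hd') : d = d' := by
  apply qd_inj m d d' hd hd'
  funext j
  have hr : (⟨m - 1 - ((⟨m - 1 - (j:ℕ), rev_lt m j⟩ : Fin m) : ℕ), rev_lt m _⟩ : Fin m) = j := by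
    have := j.isLt
    simp only [Fin.ext_iff]
    omega
  have := congrFun h ⟨m - 1 - (j:ℕ), rev_lt m j⟩
  simp only [wfin, Fin.ext_iff] at this
  rw [hr] at this
  have b1 := qd_le m d hd j
  have b2 := qd_le m d' hd' j
  have hj := j.isLt
  omega

end final

/-- For every `m ≥ 0`, the number of 321-avoiding permutations of length `2m+1`
with a unique longest increasing subsequence is at least `C_m²`. -/
theorem u321_lower_bound (m : ℕ) :
    (catalan m) ^ 2 ≤ uNum pattern321 (2 * m + 1) := by
  classical
  let Φ : {d : DyckWord // d.semilength = m} × {d : DyckWord // d.semilength = m} →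
      {p : Equiv.Perm (Fin (2*m+1)) // Avoids pattern321 p ∧ HasULIS ⇑p} :=
    fun x => ⟨mperm (qfin m x.1.1 x.1.2) (wfin m x.2.1 x.2.2)
        (qfin_strictMono m x.1.1 x.1.2) (wfin_strictMono m x.2.1 x.2.2),
      avoids_mperm _ _ _ _,
      hasULIS_mperm _ _ _ _ (qfin_le m x.1.1 x.1.2) (wfin_ge m x.2.1 x.2.2)⟩
  have hΦ : Function.Injective Φ := by
    rintro ⟨⟨d1, h1⟩, ⟨d2, h2⟩⟩ ⟨⟨d1', h1'⟩, ⟨d2', h2'⟩⟩ h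
    have h' := Subtype.ext_iff.mp h
    simp only [Φ] at h'
    obtain ⟨hqe, hwe⟩ := mperm_inj _ _ _ _ (qfin_le m d1 h1) (wfin_ge m d2 h2) _ _ _ _
      (qfin_le m d1' h1') (wfin_ge m d2' h2') h'
    have e1 : d1 = d1' := qfin_inj m d1 d1' h1 h1' hqe
    have e2 : d2 = d2' := wfin_inj m d2 d2' h2 h2' hwe
    subst e1; subst e2; rfl
  have hcard : Nat.card ({d : DyckWord // d.semilength = m} × {d : DyckWord // d.semilength = m})
      = catalan m ^ 2 := by
    rw [Nat.card_prod, Nat.card_eq_fintype_card, DyckWord.card_dyckWord_semilength_eq_catalan, sq]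
  rw [uNum, ← hcard]
  exact Nat.card_le_card_of_injective Φ hΦ
end

section
/- Let q be an indecomposable pattern of length at least 2. Then the limit as n → ∞ of (u_n(q))^{1/n} exists (as a finite real number), where u_n(q) is the number of q-avoiding permutations of length n with a unique longest increasing subsequence. -/
section ULISauxiliary

open Finset
open scoped Classical

namespace ULISaux

open Filter

variable {k : ℕ} (q : Equiv.Perm (Fin k))

/-- the `n × n` grid of possible positions of ones. -/
def grid (n : ℕ) : Finset (ℕ × ℕ) := Finset.range n ×ˢ Finset.range n

/-- a set of ones `M` contains the pattern `q` (as a 0-1 matrix). -/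
def MCont (M : Finset (ℕ × ℕ)) : Prop :=
  ∃ r c : Fin k → ℕ, StrictMono r ∧ StrictMono c ∧ ∀ i, (r i, c (q i)) ∈ M

variable {q}

lemma contract_avoid {K : ℕ} {M : Finset (ℕ × ℕ)} (hM : ¬ MCont q M) :
    ¬ MCont q (M.image fun z => (z.1 / K, z.2 / K)) := by
  rintro ⟨r, c, hr, hc, hmem⟩
  have h : ∀ i : Fin k, ∃ z ∈ M, (z.1 / K, z.2 / K) = (r i, c (q i)) := by
    intro i; simpa [Finset.mem_image] using hmem i
  choose w hw hww using h
  refine hM ⟨fun i => (w i).1, fun j => (w (q.symm j)).2, ?_, ?_, ?_⟩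
  · intro i j hij
    have h1 : (w i).1 / K = r i := congrArg Prod.fst (hww i)
    have h2 : (w j).1 / K = r j := congrArg Prod.fst (hww j)
    exact Nat.lt_of_div_lt_div (by rw [h1, h2]; exact hr hij)
  · intro i j hij
    have h1 : (w (q.symm i)).2 / K = c (q (q.symm i)) := congrArg Prod.snd (hww _)
    have h2 : (w (q.symm j)).2 / K = c (q (q.symm j)) := congrArg Prod.snd (hww _)
    rw [q.apply_symm_apply] at h1 h2
    exact Nat.lt_of_div_lt_div (by rw [h1, h2]; exact hc hij)
  · intro i
    have h := hw (q.symm (q i))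
    rw [q.symm_apply_apply] at h
    simpa using h

lemma div_eq_mem_Ico {K z a : ℕ} (hK : 0 < K) (h : z / K = a) :
    z ∈ Finset.Ico (a * K) (a * K + K) := by
  subst h
  have h1 := Nat.div_add_mod z K
  have h2 := Nat.mod_lt z hK
  have h3 : K * (z / K) = z / K * K := Nat.mul_comm _ _
  simp only [Finset.mem_Ico]
  omega

lemma wide_fiber_bound (hk : 2 ≤ k) {M : Finset (ℕ × ℕ)} (hM : ¬ MCont q M)
    (b : ℕ) (F : Finset ℕ)
    (hF : ∀ a ∈ F,
      k ≤ ((M.filter fun z => (z.1 / k ^ 2, z.2 / k ^ 2) = (a, b)).image Prod.snd).card) :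
    F.card ≤ (k - 1) * Nat.choose (k ^ 2) k := by
  classical
  set K := k ^ 2 with hK
  have hKpos : 0 < K := by positivity
  by_contra hcon
  push_neg at hcon
  have hex : ∀ a : ℕ, ∃ S : Finset ℕ, a ∈ F →
      (S ⊆ (M.filter fun z => (z.1 / K, z.2 / K) = (a, b)).image Prod.snd ∧ S.card = k) := by
    intro a
    by_cases ha : a ∈ F
    · obtain ⟨S, hS1, hS2⟩ := Finset.exists_subset_card_eq (hF a ha)
      exact ⟨S, fun _ => ⟨hS1, hS2⟩⟩
    · exact ⟨∅, fun h => absurd h ha⟩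
  choose g hg using hex
  have hmaps : ∀ a ∈ F, g a ∈ (Finset.Ico (b * K) (b * K + K)).powersetCard k := by
    intro a ha
    rw [Finset.mem_powersetCard]
    refine ⟨fun x hx => ?_, (hg a ha).2⟩
    have hx' := (hg a ha).1 hx
    simp only [Finset.mem_image, Finset.mem_filter] at hx'
    obtain ⟨z, ⟨hzM, hz⟩, rfl⟩ := hx'
    exact div_eq_mem_Ico hKpos (congrArg Prod.snd hz)
  have hcard : ((Finset.Ico (b * K) (b * K + K)).powersetCard k).card * (k - 1) < F.card := by
    rw [Finset.card_powersetCard, Nat.card_Ico]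
    have : b * K + K - b * K = K := by omega
    rw [this, Nat.mul_comm]
    exact hcon
  obtain ⟨S₀, hS₀mem, hfib⟩ :=
    Finset.exists_lt_card_fiber_of_mul_lt_card_of_maps_to hmaps hcard
  obtain ⟨hS₀sub, hS₀card⟩ := Finset.mem_powersetCard.mp hS₀mem
  have hEk : k ≤ (F.filter fun a => g a = S₀).card := by omega
  obtain ⟨A, hAE, hAcard⟩ := Finset.exists_subset_card_eq hEk
  set ea := A.orderEmbOfFin hAcard with hea
  set ec := S₀.orderEmbOfFin hS₀card with hec
  have hz : ∀ i : Fin k, ∃ z, z ∈ M ∧ (z.1 / K, z.2 / K) = ((ea i : ℕ), b) ∧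
      z.2 = (ec (q i) : ℕ) := by
    intro i
    have haF : ea i ∈ F.filter fun a => g a = S₀ := hAE (A.orderEmbOfFin_mem hAcard i)
    rw [Finset.mem_filter] at haF
    have hsub : S₀ ⊆ (M.filter fun z => (z.1 / K, z.2 / K) = ((ea i : ℕ), b)).image Prod.snd :=
      haF.2 ▸ (hg _ haF.1).1
    have hcol := hsub (S₀.orderEmbOfFin_mem hS₀card (q i))
    simp only [Finset.mem_image, Finset.mem_filter] at hcol
    obtain ⟨z, ⟨hz1, hz2⟩, hz3⟩ := hcol
    exact ⟨z, hz1, hz2, hz3⟩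
  choose z hzM hzblk hzcol using hz
  refine hM ⟨fun i => (z i).1, fun j => (ec j : ℕ), ?_, ?_, ?_⟩
  · intro i j hij
    have h1 : (z i).1 / K = ea i := congrArg Prod.fst (hzblk i)
    have h2 : (z j).1 / K = ea j := congrArg Prod.fst (hzblk j)
    exact Nat.lt_of_div_lt_div (by rw [h1, h2]; exact ea.strictMono hij)
  · exact fun i j hij => ec.strictMono hij
  · intro i
    have h := hzM i
    have : ((z i).1, (ec (q i) : ℕ)) = z i := by
      rw [← hzcol i]
    rw [this]
    exact h

lemma tall_fiber_bound (hk : 2 ≤ k) {M : Finset (ℕ × ℕ)} (hM : ¬ MCont q M)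
    (a : ℕ) (F : Finset ℕ)
    (hF : ∀ b ∈ F,
      k ≤ ((M.filter fun z => (z.1 / k ^ 2, z.2 / k ^ 2) = (a, b)).image Prod.fst).card) :
    F.card ≤ (k - 1) * Nat.choose (k ^ 2) k := by
  classical
  set K := k ^ 2 with hK
  have hKpos : 0 < K := by positivity
  by_contra hcon
  push_neg at hcon
  have hex : ∀ b : ℕ, ∃ S : Finset ℕ, b ∈ F →
      (S ⊆ (M.filter fun z => (z.1 / K, z.2 / K) = (a, b)).image Prod.fst ∧ S.card = k) := by
    intro b
    by_cases hb : b ∈ F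
    · obtain ⟨S, hS1, hS2⟩ := Finset.exists_subset_card_eq (hF b hb)
      exact ⟨S, fun _ => ⟨hS1, hS2⟩⟩
    · exact ⟨∅, fun h => absurd h hb⟩
  choose g hg using hex
  have hmaps : ∀ b ∈ F, g b ∈ (Finset.Ico (a * K) (a * K + K)).powersetCard k := by
    intro b hb
    rw [Finset.mem_powersetCard]
    refine ⟨fun x hx => ?_, (hg b hb).2⟩
    have hx' := (hg b hb).1 hx
    simp only [Finset.mem_image, Finset.mem_filter] at hx'
    obtain ⟨z, ⟨hzM, hz⟩, rfl⟩ := hx'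
    exact div_eq_mem_Ico hKpos (congrArg Prod.fst hz)
  have hcard : ((Finset.Ico (a * K) (a * K + K)).powersetCard k).card * (k - 1) < F.card := by
    rw [Finset.card_powersetCard, Nat.card_Ico]
    have : a * K + K - a * K = K := by omega
    rw [this, Nat.mul_comm]
    exact hcon
  obtain ⟨S₀, hS₀mem, hfib⟩ :=
    Finset.exists_lt_card_fiber_of_mul_lt_card_of_maps_to hmaps hcard
  obtain ⟨hS₀sub, hS₀card⟩ := Finset.mem_powersetCard.mp hS₀mem
  have hEk : k ≤ (F.filter fun b => g b = S₀).card := by omega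
  obtain ⟨A, hAE, hAcard⟩ := Finset.exists_subset_card_eq hEk
  set eb := A.orderEmbOfFin hAcard with heb
  set er := S₀.orderEmbOfFin hS₀card with her
  have hz : ∀ i : Fin k, ∃ z, z ∈ M ∧ (z.1 / K, z.2 / K) = (a, (eb (q i) : ℕ)) ∧
      z.1 = (er i : ℕ) := by
    intro i
    have hbF : eb (q i) ∈ F.filter fun b => g b = S₀ := hAE (A.orderEmbOfFin_mem hAcard (q i))
    rw [Finset.mem_filter] at hbF
    have hsub : S₀ ⊆ (M.filter fun z => (z.1 / K, z.2 / K) = (a, (eb (q i) : ℕ))).image Prod.fst :=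
      hbF.2 ▸ (hg _ hbF.1).1
    have hrow := hsub (S₀.orderEmbOfFin_mem hS₀card i)
    simp only [Finset.mem_image, Finset.mem_filter] at hrow
    obtain ⟨z, ⟨hz1, hz2⟩, hz3⟩ := hrow
    exact ⟨z, hz1, hz2, hz3⟩
  choose z hzM hzblk hzrow using hz
  refine hM ⟨fun i => (er i : ℕ), fun j => (z (q.symm j)).2, ?_, ?_, ?_⟩
  · exact fun i j hij => er.strictMono hij
  · intro i j hij
    have h1 : (z (q.symm i)).2 / K = eb (q (q.symm i)) := congrArg Prod.snd (hzblk _)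
    have h2 : (z (q.symm j)).2 / K = eb (q (q.symm j)) := congrArg Prod.snd (hzblk _)
    rw [q.apply_symm_apply] at h1 h2
    exact Nat.lt_of_div_lt_div (by rw [h1, h2]; exact eb.strictMono hij)
  · intro i
    have h := hzM (q.symm (q i))
    rw [q.symm_apply_apply] at h
    have : ((er i : ℕ), (z (q.symm (q i))).2) = z i := by
      rw [q.symm_apply_apply, ← hzrow i]
    rw [this]
    exact hzM i

/-- Füredi–Hajnal / Marcus–Tardos: linear bound on ones in a matrix avoiding `q`. -/
theorem FH (hk : 2 ≤ k) : ∀ n (M : Finset (ℕ × ℕ)), M ⊆ grid n → ¬ MCont q M →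
    M.card ≤ (k ^ 4 + 2 * k * (k ^ 2 + 1) * ((k - 1) * Nat.choose (k ^ 2) k)) * n := by
  classical
  intro n
  induction n using Nat.strong_induction_on with
  | _ n ih =>
  intro M hMg hMa
  set t := (k - 1) * Nat.choose (k ^ 2) k with ht
  set C := k ^ 4 + 2 * k * (k ^ 2 + 1) * t with hC
  by_cases hn : n ≤ k ^ 4
  · calc M.card ≤ (grid n).card := Finset.card_le_card hMg
      _ = n * n := by simp [grid]
      _ ≤ k ^ 4 * n := Nat.mul_le_mul_right n hn
      _ ≤ C * n := Nat.mul_le_mul_right n (by rw [hC]; exact Nat.le_add_right _ _)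
  · push_neg at hn
    have hKpos : 0 < k ^ 2 := by positivity
    have hk4 : (16 : ℕ) ≤ k ^ 4 := by
      calc (16:ℕ) = 2 ^ 4 := by norm_num
        _ ≤ k ^ 4 := Nat.pow_le_pow_left hk 4
    set m := (n - 1) / k ^ 2 + 1 with hm
    have hK4 : 4 ≤ k ^ 2 := by
      calc (4:ℕ) = 2 ^ 2 := by norm_num
        _ ≤ k ^ 2 := Nat.pow_le_pow_left hk 2
    have hmlt : m < n := by
      have h1 : (n - 1) / k ^ 2 ≤ (n - 1) / 4 := Nat.div_le_div_left hK4 (by norm_num)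
      have h2 : (n - 1) / 4 < n - 1 := Nat.div_lt_self (by omega) (by norm_num)
      omega
    set f : ℕ × ℕ → ℕ × ℕ := fun z => (z.1 / k ^ 2, z.2 / k ^ 2) with hf
    set M' := M.image f with hM'
    have hgridmem : ∀ z ∈ M, z.1 < n ∧ z.2 < n := by
      intro z hz
      have h := hMg hz
      simp only [grid, Finset.mem_product, Finset.mem_range] at h
      exact h
    have hdivm : ∀ z : ℕ, z < n → z / k ^ 2 < m := by
      intro z hz
      have : z / k ^ 2 ≤ (n - 1) / k ^ 2 := Nat.div_le_div_right (by omega)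
      omega
    have hM'g : M' ⊆ grid m := by
      intro p hp
      simp only [hM', Finset.mem_image] at hp
      obtain ⟨z, hz, rfl⟩ := hp
      obtain ⟨h1, h2⟩ := hgridmem z hz
      simp only [grid, Finset.mem_product, Finset.mem_range]
      exact ⟨hdivm _ h1, hdivm _ h2⟩
    have hM'a : ¬ MCont q M' := contract_avoid hMa
    have hM'card : M'.card ≤ C * m := ih m hmlt M' hM'g hM'a
    have hmapsto : ∀ z ∈ M, f z ∈ M' := fun z hz => Finset.mem_image_of_mem f hz
    have hsum : M.card = ∑ p ∈ M', (M.filter fun z => f z = p).card :=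
      Finset.card_eq_sum_card_fiberwise hmapsto
    have hblk_le : ∀ p : ℕ × ℕ, (M.filter fun z => f z = p).card ≤ k ^ 2 * k ^ 2 := by
      intro p
      have hsub : (M.filter fun z => f z = p) ⊆
          (Finset.Ico (p.1 * k ^ 2) (p.1 * k ^ 2 + k ^ 2)) ×ˢ
          (Finset.Ico (p.2 * k ^ 2) (p.2 * k ^ 2 + k ^ 2)) := by
        intro z hz
        rw [Finset.mem_filter] at hz
        have h1 := congrArg Prod.fst hz.2
        have h2 := congrArg Prod.snd hz.2
        rw [Finset.mem_product]
        exact ⟨div_eq_mem_Ico hKpos h1, div_eq_mem_Ico hKpos h2⟩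
      have e1 : p.1 * k ^ 2 + k ^ 2 - p.1 * k ^ 2 = k ^ 2 := by omega
      have e2 : p.2 * k ^ 2 + k ^ 2 - p.2 * k ^ 2 = k ^ 2 := by omega
      calc (M.filter fun z => f z = p).card ≤ _ := Finset.card_le_card hsub
        _ = k ^ 2 * k ^ 2 := by rw [Finset.card_product, Nat.card_Ico, Nat.card_Ico, e1, e2]
    set Wide : ℕ × ℕ → Prop := fun p => k ≤ ((M.filter fun z => f z = p).image Prod.snd).card
      with hWide
    set Tall : ℕ × ℕ → Prop := fun p => k ≤ ((M.filter fun z => f z = p).image Prod.fst).card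
      with hTall
    have hblk_small : ∀ p : ℕ × ℕ, ¬ (Wide p ∨ Tall p) →
        (M.filter fun z => f z = p).card ≤ (k - 1) * (k - 1) := by
      intro p hp
      push_neg at hp
      have hsub : (M.filter fun z => f z = p) ⊆
          ((M.filter fun z => f z = p).image Prod.fst) ×ˢ
          ((M.filter fun z => f z = p).image Prod.snd) := by
        intro z hz
        rw [Finset.mem_product]
        exact ⟨Finset.mem_image_of_mem _ hz, Finset.mem_image_of_mem _ hz⟩
      calc (M.filter fun z => f z = p).card ≤ _ := Finset.card_le_card hsub
        _ = _ * _ := Finset.card_product _ _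
        _ ≤ (k - 1) * (k - 1) := Nat.mul_le_mul (by omega) (by
            have := hp.1
            rw [hWide] at hp
            omega)
    -- count wide blocks
    have hWcard : (M'.filter fun p => Wide p).card ≤ m * t := by
      have hmaps2 : ∀ p ∈ M'.filter fun p => Wide p, p.2 ∈ Finset.range m := by
        intro p hp
        rw [Finset.mem_filter] at hp
        have := hM'g hp.1
        simp only [grid, Finset.mem_product, Finset.mem_range] at this
        simp only [Finset.mem_range]
        exact this.2
      rw [Finset.card_eq_sum_card_fiberwise hmaps2]
      have hfib : ∀ b ∈ Finset.range m,
          ((M'.filter fun p => Wide p).filter fun p => p.2 = b).card ≤ t := by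
        intro b _
        set Wb := (M'.filter fun p => Wide p).filter fun p => p.2 = b with hWb
        have hinj : Set.InjOn Prod.fst (Wb : Set (ℕ × ℕ)) := by
          intro p hp p' hp' hpp
          rw [hWb, Finset.mem_coe, Finset.mem_filter] at hp hp'
          exact Prod.ext hpp (hp.2.trans hp'.2.symm)
        have himg : (Wb.image Prod.fst).card = Wb.card := Finset.card_image_of_injOn hinj
        have hb := wide_fiber_bound (q := q) hk hMa b (Wb.image Prod.fst) (by
          intro a ha
          rw [Finset.mem_image] at ha
          obtain ⟨p, hp, rfl⟩ := ha
          have hp' := hp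
          rw [hWb, Finset.mem_filter, Finset.mem_filter] at hp'
          have hpe : p = (p.1, b) := Prod.ext rfl hp'.2
          have := hp'.1.2
          rw [hWide] at this
          rw [hpe] at this
          exact this)
        rw [ht]
        omega
      calc ∑ b ∈ Finset.range m, ((M'.filter fun p => Wide p).filter fun p => p.2 = b).card
          ≤ (Finset.range m).card * t := by
            rw [← smul_eq_mul]
            exact Finset.sum_le_card_nsmul _ _ _ (fun b hb => hfib b hb)
        _ = m * t := by rw [Finset.card_range]
    -- count tall blocks
    have hTcard : (M'.filter fun p => Tall p).card ≤ m * t := by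
      have hmaps2 : ∀ p ∈ M'.filter fun p => Tall p, p.1 ∈ Finset.range m := by
        intro p hp
        rw [Finset.mem_filter] at hp
        have := hM'g hp.1
        simp only [grid, Finset.mem_product, Finset.mem_range] at this
        simp only [Finset.mem_range]
        exact this.1
      rw [Finset.card_eq_sum_card_fiberwise hmaps2]
      have hfib : ∀ a ∈ Finset.range m,
          ((M'.filter fun p => Tall p).filter fun p => p.1 = a).card ≤ t := by
        intro a _
        set Tb := (M'.filter fun p => Tall p).filter fun p => p.1 = a with hTb
        have hinj : Set.InjOn Prod.snd (Tb : Set (ℕ × ℕ)) := by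
          intro p hp p' hp' hpp
          rw [hTb, Finset.mem_coe, Finset.mem_filter] at hp hp'
          exact Prod.ext (hp.2.trans hp'.2.symm) hpp
        have himg : (Tb.image Prod.snd).card = Tb.card := Finset.card_image_of_injOn hinj
        have hb := tall_fiber_bound (q := q) hk hMa a (Tb.image Prod.snd) (by
          intro b hbm
          rw [Finset.mem_image] at hbm
          obtain ⟨p, hp, rfl⟩ := hbm
          have hp' := hp
          rw [hTb, Finset.mem_filter, Finset.mem_filter] at hp'
          have hpe : p = (a, p.2) := Prod.ext hp'.2 rfl
          have := hp'.1.2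
          rw [hTall] at this
          rw [hpe] at this
          exact this)
        rw [ht]
        omega
      calc ∑ a ∈ Finset.range m, ((M'.filter fun p => Tall p).filter fun p => p.1 = a).card
          ≤ (Finset.range m).card * t := by
            rw [← smul_eq_mul]
            exact Finset.sum_le_card_nsmul _ _ _ (fun a ha => hfib a ha)
        _ = m * t := by rw [Finset.card_range]
    -- split the sum
    have hWT : (M'.filter fun p => Wide p ∨ Tall p).card ≤ m * t + m * t := by
      have : (M'.filter fun p => Wide p ∨ Tall p) ⊆
          (M'.filter fun p => Wide p) ∪ (M'.filter fun p => Tall p) := by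
        rw [← Finset.filter_or]
      calc (M'.filter fun p => Wide p ∨ Tall p).card
          ≤ ((M'.filter fun p => Wide p) ∪ (M'.filter fun p => Tall p)).card :=
            Finset.card_le_card this
        _ ≤ _ + _ := Finset.card_union_le _ _
        _ ≤ m * t + m * t := Nat.add_le_add hWcard hTcard
    have hsplit : M.card ≤ k ^ 2 * k ^ 2 * (m * t + m * t) + (k - 1) * (k - 1) * (C * m) := by
      rw [hsum, ← Finset.sum_filter_add_sum_filter_not M' (fun p => Wide p ∨ Tall p)]
      have h1 : ∑ p ∈ M'.filter (fun p => Wide p ∨ Tall p), (M.filter fun z => f z = p).card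
          ≤ (M'.filter (fun p => Wide p ∨ Tall p)).card * (k ^ 2 * k ^ 2) := by
        rw [← smul_eq_mul]
        exact Finset.sum_le_card_nsmul _ _ _ (fun p _ => hblk_le p)
      have h2 : ∑ p ∈ M'.filter (fun p => ¬(Wide p ∨ Tall p)), (M.filter fun z => f z = p).card
          ≤ (M'.filter (fun p => ¬(Wide p ∨ Tall p))).card * ((k - 1) * (k - 1)) := by
        rw [← smul_eq_mul]
        refine Finset.sum_le_card_nsmul _ _ _ (fun p hp => ?_)
        rw [Finset.mem_filter] at hp
        exact hblk_small p hp.2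
      have h3 : (M'.filter (fun p => ¬(Wide p ∨ Tall p))).card ≤ M'.card :=
        Finset.card_le_card (Finset.filter_subset _ _)
      calc _ ≤ (M'.filter (fun p => Wide p ∨ Tall p)).card * (k ^ 2 * k ^ 2)
            + (M'.filter (fun p => ¬(Wide p ∨ Tall p))).card * ((k - 1) * (k - 1)) :=
            Nat.add_le_add h1 h2
        _ ≤ (m * t + m * t) * (k ^ 2 * k ^ 2) + M'.card * ((k - 1) * (k - 1)) :=
            Nat.add_le_add (Nat.mul_le_mul_right _ hWT) (Nat.mul_le_mul_right _ h3)
        _ ≤ (m * t + m * t) * (k ^ 2 * k ^ 2) + (C * m) * ((k - 1) * (k - 1)) :=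
            Nat.add_le_add_left (Nat.mul_le_mul_right _ hM'card) _
        _ = k ^ 2 * k ^ 2 * (m * t + m * t) + (k - 1) * (k - 1) * (C * m) := by ring
    -- final arithmetic
    have hineq1 : k ^ 3 + (k - 1) * (k - 1) * (k ^ 2 + 1) ≤ k ^ 4 := by
      obtain ⟨j, rfl⟩ : ∃ j, k = j + 1 := ⟨k - 1, by omega⟩
      have hj : 1 ≤ j := by omega
      have hj1 : j + 1 - 1 = j := by omega
      rw [hj1]
      nlinarith
    set X := 2 * (k ^ 2 * k ^ 2) * t + (k - 1) * (k - 1) * C with hX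
    have step1 : 2 * (k ^ 2 * k ^ 2) * t * (k ^ 2 + 1) ≤ k ^ 3 * C := by
      rw [hC]
      calc 2 * (k ^ 2 * k ^ 2) * t * (k ^ 2 + 1) = k ^ 3 * (2 * k * (k ^ 2 + 1) * t) := by ring
        _ ≤ k ^ 3 * (k ^ 4 + 2 * k * (k ^ 2 + 1) * t) :=
            Nat.mul_le_mul_left _ (Nat.le_add_left _ _)
    have hkey : X * (k ^ 2 + 1) ≤ C * (k ^ 2 * k ^ 2) := by
      calc X * (k ^ 2 + 1)
          = 2 * (k ^ 2 * k ^ 2) * t * (k ^ 2 + 1) + (k - 1) * (k - 1) * (k ^ 2 + 1) * C := by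
            rw [hX]; ring
        _ ≤ k ^ 3 * C + (k - 1) * (k - 1) * (k ^ 2 + 1) * C :=
            Nat.add_le_add_right step1 _
        _ = (k ^ 3 + (k - 1) * (k - 1) * (k ^ 2 + 1)) * C := by ring
        _ ≤ k ^ 4 * C := Nat.mul_le_mul_right _ hineq1
        _ = C * (k ^ 2 * k ^ 2) := by ring
    have hKm : m * k ^ 2 ≤ n + k ^ 2 := by
      have h1 : (n - 1) / k ^ 2 * k ^ 2 ≤ n - 1 := Nat.div_mul_le_self _ _
      have h2 : m * k ^ 2 = (n - 1) / k ^ 2 * k ^ 2 + k ^ 2 := by rw [hm]; ring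
      omega
    have hk4n : k ^ 2 * k ^ 2 ≤ n := by
      have : k ^ 2 * k ^ 2 = k ^ 4 := by ring
      omega
    have hXfin : X * m * (k ^ 2 * k ^ 2) ≤ C * n * (k ^ 2 * k ^ 2) := by
      calc X * m * (k ^ 2 * k ^ 2) = X * (m * k ^ 2) * k ^ 2 := by ring
        _ ≤ X * (n + k ^ 2) * k ^ 2 :=
            Nat.mul_le_mul_right _ (Nat.mul_le_mul_left _ hKm)
        _ = X * (n * k ^ 2) + X * (k ^ 2 * k ^ 2) := by ring
        _ ≤ X * (n * k ^ 2) + X * n := Nat.add_le_add_left (Nat.mul_le_mul_left _ hk4n) _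
        _ = (X * (k ^ 2 + 1)) * n := by ring
        _ ≤ (C * (k ^ 2 * k ^ 2)) * n := Nat.mul_le_mul_right _ hkey
        _ = C * n * (k ^ 2 * k ^ 2) := by ring
    have hXm : X * m ≤ C * n := Nat.le_of_mul_le_mul_right hXfin (by positivity)
    calc M.card ≤ k ^ 2 * k ^ 2 * (m * t + m * t) + (k - 1) * (k - 1) * (C * m) := hsplit
      _ = X * m := by rw [hX]; ring
      _ ≤ C * n := hXm

/-- the set of `q`-avoiding 0-1 matrices supported on the `n × n` grid. -/
noncomputable def AvSet (q : Equiv.Perm (Fin k)) (n : ℕ) : Finset (Finset (ℕ × ℕ)) :=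
  (grid n).powerset.filter fun M => ¬ MCont q M

lemma mem_AvSet {n : ℕ} {M : Finset (ℕ × ℕ)} :
    M ∈ AvSet q n ↔ M ⊆ grid n ∧ ¬ MCont q M := by
  rw [AvSet, Finset.mem_filter, Finset.mem_powerset]

lemma grid_mono {n n' : ℕ} (h : n ≤ n') : grid n ⊆ grid n' := by
  intro z hz
  simp only [grid, Finset.mem_product, Finset.mem_range] at hz ⊢
  omega

lemma AvSet_mono {n n' : ℕ} (h : n ≤ n') : AvSet q n ⊆ AvSet q n' := by
  intro M hM
  rw [mem_AvSet] at hM ⊢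
  exact ⟨hM.1.trans (grid_mono h), hM.2⟩

lemma AvSet_step (hk : 2 ≤ k) (n : ℕ) :
    (AvSet q (2 * n)).card ≤ (AvSet q n).card *
      2 ^ (4 * ((k ^ 4 + 2 * k * (k ^ 2 + 1) * ((k - 1) * Nat.choose (k ^ 2) k)) * n)) := by
  classical
  set Cst := k ^ 4 + 2 * k * (k ^ 2 + 1) * ((k - 1) * Nat.choose (k ^ 2) k) with hCst
  set f2 : Finset (ℕ × ℕ) → Finset (ℕ × ℕ) :=
    fun M => M.image fun z => (z.1 / 2, z.2 / 2) with hf2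
  have hmaps : ∀ M ∈ AvSet q (2 * n), f2 M ∈ AvSet q n := by
    intro M hM
    rw [mem_AvSet] at hM ⊢
    constructor
    · intro p hp
      simp only [hf2, Finset.mem_image] at hp
      obtain ⟨z, hz, rfl⟩ := hp
      have := hM.1 hz
      simp only [grid, Finset.mem_product, Finset.mem_range] at this ⊢
      omega
    · exact contract_avoid hM.2
  rw [Finset.card_eq_sum_card_fiberwise hmaps]
  have hfiber : ∀ M' ∈ AvSet q n,
      ((AvSet q (2 * n)).filter fun M => f2 M = M').card ≤ 2 ^ (4 * (Cst * n)) := by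
    intro M' hM'
    rw [mem_AvSet] at hM'
    have hM'card : M'.card ≤ Cst * n := FH hk n M' hM'.1 hM'.2
    set enc : Finset (ℕ × ℕ) → Finset ((ℕ × ℕ) × (ℕ × ℕ)) :=
      fun M => M.image fun z => ((z.1 / 2, z.2 / 2), (z.1 % 2, z.2 % 2)) with henc
    have hdec : ∀ (M : Finset (ℕ × ℕ)) (z : ℕ × ℕ),
        z ∈ M ↔ ((z.1 / 2, z.2 / 2), (z.1 % 2, z.2 % 2)) ∈ enc M := by
      intro M z
      constructor
      · intro h; exact Finset.mem_image_of_mem _ h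
      · intro h
        simp only [henc, Finset.mem_image, Prod.mk.injEq] at h
        obtain ⟨w, hw, ⟨⟨e1, e2⟩, e3, e4⟩⟩ := h
        have hz1 : w.1 = z.1 := by omega
        have hz2 : w.2 = z.2 := by omega
        have : w = z := Prod.ext hz1 hz2
        rwa [← this]
    have hinj : Set.InjOn enc
        (((AvSet q (2 * n)).filter fun M => f2 M = M') : Set (Finset (ℕ × ℕ))) := by
      intro M1 _ M2 _ he
      ext z
      rw [hdec M1 z, hdec M2 z, he]
    have himg : ∀ M ∈ (AvSet q (2 * n)).filter fun M => f2 M = M',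
        enc M ∈ (M' ×ˢ grid 2).powerset := by
      intro M hM
      rw [Finset.mem_filter] at hM
      rw [Finset.mem_powerset]
      intro y hy
      simp only [henc, Finset.mem_image] at hy
      obtain ⟨z, hz, rfl⟩ := hy
      rw [Finset.mem_product]
      constructor
      · rw [← hM.2]
        exact Finset.mem_image_of_mem _ hz
      · simp only [grid, Finset.mem_product, Finset.mem_range]
        omega
    calc ((AvSet q (2 * n)).filter fun M => f2 M = M').card
        ≤ ((M' ×ˢ grid 2).powerset).card := Finset.card_le_card_of_injOn enc himg hinj
      _ = 2 ^ (M' ×ˢ grid 2).card := Finset.card_powerset _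
      _ = 2 ^ (M'.card * 4) := by
          have h4 : (grid 2).card = 4 := by decide
          rw [Finset.card_product, h4]
      _ ≤ 2 ^ (4 * (Cst * n)) := by
          apply Nat.pow_le_pow_right (by norm_num)
          omega
  calc ∑ M' ∈ AvSet q n, ((AvSet q (2 * n)).filter fun M => f2 M = M').card
      ≤ (AvSet q n).card * 2 ^ (4 * (Cst * n)) := by
        rw [← smul_eq_mul]
        exact Finset.sum_le_card_nsmul _ _ _ hfiber

lemma AvSet_pow (hk : 2 ≤ k) (j : ℕ) :
    (AvSet q (2 ^ j)).card ≤
      2 ^ (8 * (k ^ 4 + 2 * k * (k ^ 2 + 1) * ((k - 1) * Nat.choose (k ^ 2) k)) * 2 ^ j) := by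
  set Cst := k ^ 4 + 2 * k * (k ^ 2 + 1) * ((k - 1) * Nat.choose (k ^ 2) k) with hCst
  have hCst1 : 1 ≤ Cst := by
    have : 1 ≤ k ^ 4 := Nat.one_le_pow _ _ (by omega)
    omega
  induction j with
  | zero =>
    have h1 : (AvSet q 1).card ≤ ((grid 1).powerset).card :=
      Finset.card_le_card (Finset.filter_subset _ _)
    have h2 : ((grid 1).powerset).card = 2 := by decide
    have h3 : (2:ℕ) ≤ 2 ^ (8 * Cst * 2 ^ 0) := by
      calc (2:ℕ) = 2 ^ 1 := by norm_num
        _ ≤ 2 ^ (8 * Cst * 2 ^ 0) := Nat.pow_le_pow_right (by norm_num) (by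
          simp only [pow_zero, mul_one]
          omega)
    simp only [pow_zero] at h3 ⊢
    omega
  | succ j ihj =>
    have h1 : (2:ℕ) ^ (j + 1) = 2 * 2 ^ j := by ring
    calc (AvSet q (2 ^ (j + 1))).card = (AvSet q (2 * 2 ^ j)).card := by rw [h1]
      _ ≤ (AvSet q (2 ^ j)).card * 2 ^ (4 * (Cst * 2 ^ j)) := AvSet_step hk (2 ^ j)
      _ ≤ 2 ^ (8 * Cst * 2 ^ j) * 2 ^ (4 * (Cst * 2 ^ j)) := Nat.mul_le_mul_right _ ihj
      _ = 2 ^ (8 * Cst * 2 ^ j + 4 * (Cst * 2 ^ j)) := by rw [← pow_add]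
      _ ≤ 2 ^ (8 * Cst * 2 ^ (j + 1)) := by
          apply Nat.pow_le_pow_right (by norm_num)
          have : (2:ℕ) ^ (j+1) = 2 * 2 ^ j := by ring
          rw [this]
          ring_nf
          omega

lemma AvSet_exp (hk : 2 ≤ k) (n : ℕ) (hn : 1 ≤ n) :
    (AvSet q n).card ≤
      (2 ^ (16 * (k ^ 4 + 2 * k * (k ^ 2 + 1) * ((k - 1) * Nat.choose (k ^ 2) k)))) ^ n := by
  set Cst := k ^ 4 + 2 * k * (k ^ 2 + 1) * ((k - 1) * Nat.choose (k ^ 2) k) with hCst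
  set j := Nat.clog 2 n with hj
  have hnj : n ≤ 2 ^ j := Nat.le_pow_clog (by norm_num) n
  have hjn : 2 ^ j ≤ 2 * n := by
    rcases Nat.lt_or_ge n 2 with h2 | h2
    · have hn1 : n = 1 := by omega
      subst hn1
      have : Nat.clog 2 1 = 0 := by simp
      rw [hj, this]
      norm_num
    · have hj1 : 1 ≤ j := by
        by_contra hcon
        have : j = 0 := by omega
        rw [this] at hnj
        simp at hnj
        omega
      have hlt : 2 ^ (j - 1) < n := Nat.pow_pred_clog_lt_self (by norm_num) h2
      have : 2 ^ j = 2 * 2 ^ (j - 1) := by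
        rw [← pow_succ']
        congr 1
        omega
      omega
  calc (AvSet q n).card ≤ (AvSet q (2 ^ j)).card := Finset.card_le_card (AvSet_mono hnj)
    _ ≤ 2 ^ (8 * Cst * 2 ^ j) := AvSet_pow hk j
    _ ≤ 2 ^ (8 * Cst * (2 * n)) := by
        apply Nat.pow_le_pow_right (by norm_num)
        exact Nat.mul_le_mul_left _ hjn
    _ = (2 ^ (16 * Cst)) ^ n := by
        rw [← pow_mul]
        congr 1
        ring
/-- the permutation matrix of `p`, as a finite set of positions. -/
def Mat {n : ℕ} (p : Equiv.Perm (Fin n)) : Finset (ℕ × ℕ) :=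
  Finset.univ.image fun i : Fin n => ((i : ℕ), (p i : ℕ))

lemma Mat_mem_AvSet {n : ℕ} {p : Equiv.Perm (Fin n)} (h : Avoids q p) :
    Mat p ∈ AvSet q n := by
  rw [mem_AvSet]
  constructor
  · intro z hz
    simp only [Mat, Finset.mem_image, Finset.mem_univ, true_and] at hz
    obtain ⟨i, rfl⟩ := hz
    simp only [grid, Finset.mem_product, Finset.mem_range]
    exact ⟨i.isLt, (p i).isLt⟩
  · rintro ⟨r, c, hr, hc, hmem⟩
    have hex : ∀ i : Fin k, ∃ a : Fin n, (a : ℕ) = r i ∧ ((p a : ℕ)) = c (q i) := by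
      intro i
      have := hmem i
      simp only [Mat, Finset.mem_image, Finset.mem_univ, true_and, Prod.mk.injEq] at this
      obtain ⟨a, ha1, ha2⟩ := this
      exact ⟨a, ha1, ha2⟩
    choose a ha1 ha2 using hex
    refine h ⟨a, ?_, ?_⟩
    · intro i j hij
      have : (a i : ℕ) < (a j : ℕ) := by rw [ha1, ha1]; exact hr hij
      exact this
    · intro i j
      constructor
      · intro hlt
        have hval : (p (a i) : ℕ) < (p (a j) : ℕ) := hlt
        rw [ha2, ha2] at hval
        exact hc.lt_iff_lt.mp hval
      · intro hlt
        have hval : (c (q i) : ℕ) < c (q j) := hc hlt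
        rw [← ha2, ← ha2] at hval
        exact hval

lemma Mat_injective {n : ℕ} : Function.Injective (Mat (n := n)) := by
  intro p p' h
  ext i
  have hi : ((i : ℕ), (p i : ℕ)) ∈ Mat p' := by
    rw [← h]
    exact Finset.mem_image_of_mem _ (Finset.mem_univ i)
  simp only [Mat, Finset.mem_image, Finset.mem_univ, true_and, Prod.mk.injEq] at hi
  obtain ⟨a, ha1, ha2⟩ := hi
  have ha : a = i := Fin.ext ha1
  subst ha
  exact ha2.symm

lemma uNum_le_AvSet_card (n : ℕ) : uNum q n ≤ (AvSet q n).card := by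
  rw [uNum, ← Nat.card_eq_finsetCard (AvSet q n)]
  apply Nat.card_le_card_of_injective
    (f := fun p : {p : Equiv.Perm (Fin n) // Avoids q p ∧ HasULIS ⇑p} =>
      (⟨Mat p.1, Mat_mem_AvSet p.2.1⟩ : {M // M ∈ AvSet q n}))
  intro p p' h
  simp only [Subtype.mk.injEq] at h
  exact Subtype.ext (Mat_injective h)

lemma one_avoids (hk : 2 ≤ k) (hq : Indecomposable q) (n : ℕ) :
    Avoids q (1 : Equiv.Perm (Fin n)) := by
  rintro ⟨f, hf, hcond⟩
  refine hq ⟨1, le_refl 1, by omega, ?_⟩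
  intro a b ha hb
  have hab : a < b := by
    rw [Fin.lt_def]
    omega
  have : f a < f b := hf hab
  have h1 : (1 : Equiv.Perm (Fin n)) (f a) < (1 : Equiv.Perm (Fin n)) (f b) := by
    simpa using this
  exact (hcond a b).mp h1

lemma one_hasULIS (n : ℕ) : HasULIS ⇑(1 : Equiv.Perm (Fin n)) := by
  refine ⟨Finset.univ, ⟨?_, ?_⟩, ?_⟩
  · intro i _ j _ hij
    simpa using hij
  · intro t _
    exact Finset.card_le_univ t
  · rintro y ⟨hyinc, hymax⟩
    have h1 : Finset.univ.card ≤ y.card := hymax Finset.univ (by intro i _ j _ hij; simpa using hij)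
    apply Finset.eq_univ_of_card
    have := Finset.card_le_univ y
    rw [Finset.card_univ] at *
    omega

lemma uNum_pos (hk : 2 ≤ k) (hq : Indecomposable q) (n : ℕ) : 1 ≤ uNum q n := by
  rw [uNum]
  have : Nonempty {p : Equiv.Perm (Fin n) // Avoids q p ∧ HasULIS ⇑p} :=
    ⟨⟨1, one_avoids hk hq n, one_hasULIS n⟩⟩
  exact Nat.card_pos

/-- direct sum of two permutations. -/
def dsum {m n : ℕ} (p1 : Equiv.Perm (Fin m)) (p2 : Equiv.Perm (Fin n)) :
    Equiv.Perm (Fin (m + n)) :=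
  finSumFinEquiv.symm.trans ((Equiv.sumCongr p1 p2).trans finSumFinEquiv)

variable {m n : ℕ} {p1 : Equiv.Perm (Fin m)} {p2 : Equiv.Perm (Fin n)}

lemma dsum_castAdd (a : Fin m) :
    dsum p1 p2 (Fin.castAdd n a) = Fin.castAdd n (p1 a) := by
  simp [dsum]

lemma dsum_natAdd (b : Fin n) :
    dsum p1 p2 (Fin.natAdd m b) = Fin.natAdd m (p2 b) := by
  simp [dsum]

lemma fin_split (i : Fin (m + n)) :
    (∃ a : Fin m, i = Fin.castAdd n a) ∨ (∃ b : Fin n, i = Fin.natAdd m b) := by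
  refine Fin.addCases ?_ ?_ i
  · exact fun a => Or.inl ⟨a, rfl⟩
  · exact fun b => Or.inr ⟨b, rfl⟩

lemma castAdd_inj : Function.Injective (Fin.castAdd n : Fin m → Fin (m + n)) := by
  intro a a' h
  exact Fin.ext (by simpa using congrArg Fin.val h)

lemma natAdd_inj : Function.Injective (Fin.natAdd m : Fin n → Fin (m + n)) := by
  intro b b' h
  have := congrArg Fin.val h
  simp only [Fin.coe_natAdd] at this
  exact Fin.ext (by omega)

lemma castAdd_ne_natAdd (a : Fin m) (b : Fin n) :
    Fin.castAdd n a ≠ Fin.natAdd m b := by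
  intro h
  have := congrArg Fin.val h
  simp only [Fin.coe_castAdd, Fin.coe_natAdd] at this
  omega

def split1 (s : Finset (Fin (m + n))) : Finset (Fin m) :=
  Finset.univ.filter fun a => Fin.castAdd n a ∈ s

def split2 (s : Finset (Fin (m + n))) : Finset (Fin n) :=
  Finset.univ.filter fun b => Fin.natAdd m b ∈ s

def join (s1 : Finset (Fin m)) (s2 : Finset (Fin n)) : Finset (Fin (m + n)) :=
  s1.image (Fin.castAdd n) ∪ s2.image (Fin.natAdd m)

lemma mem_split1 {s : Finset (Fin (m + n))} {a : Fin m} :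
    a ∈ split1 s ↔ Fin.castAdd n a ∈ s := by simp [split1]

lemma mem_split2 {s : Finset (Fin (m + n))} {b : Fin n} :
    b ∈ split2 s ↔ Fin.natAdd m b ∈ s := by simp [split2]

lemma mem_join {s1 : Finset (Fin m)} {s2 : Finset (Fin n)} {i : Fin (m + n)} :
    i ∈ join s1 s2 ↔ (∃ a ∈ s1, Fin.castAdd n a = i) ∨ (∃ b ∈ s2, Fin.natAdd m b = i) := by
  simp [join]

lemma split1_join (s1 : Finset (Fin m)) (s2 : Finset (Fin n)) : split1 (join s1 s2) = s1 := by
  ext a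
  rw [mem_split1, mem_join]
  constructor
  · rintro (⟨a', ha', he⟩ | ⟨b, hb, he⟩)
    · rwa [← castAdd_inj he]
    · exact absurd he.symm (castAdd_ne_natAdd a b)
  · intro ha
    exact Or.inl ⟨a, ha, rfl⟩

lemma split2_join (s1 : Finset (Fin m)) (s2 : Finset (Fin n)) : split2 (join s1 s2) = s2 := by
  ext b
  rw [mem_split2, mem_join]
  constructor
  · rintro (⟨a, ha, he⟩ | ⟨b', hb', he⟩)
    · exact absurd he (castAdd_ne_natAdd a b)
    · rwa [← natAdd_inj he]
  · intro hb
    exact Or.inr ⟨b, hb, rfl⟩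

lemma join_split (s : Finset (Fin (m + n))) : join (split1 s) (split2 s) = s := by
  ext i
  rw [mem_join]
  rcases fin_split i with ⟨a, rfl⟩ | ⟨b, rfl⟩
  · constructor
    · rintro (⟨a', ha', he⟩ | ⟨b, hb, he⟩)
      · rw [← castAdd_inj he]
        exact mem_split1.mp ha'
      · exact absurd he.symm (castAdd_ne_natAdd a b)
    · intro h
      exact Or.inl ⟨a, mem_split1.mpr h, rfl⟩
  · constructor
    · rintro (⟨a, ha, he⟩ | ⟨b', hb', he⟩)
      · exact absurd he (castAdd_ne_natAdd a b)
      · rw [← natAdd_inj he]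
        exact mem_split2.mp hb'
    · intro h
      exact Or.inr ⟨b, mem_split2.mpr h, rfl⟩

lemma card_join (s1 : Finset (Fin m)) (s2 : Finset (Fin n)) :
    (join s1 s2).card = s1.card + s2.card := by
  rw [join, Finset.card_union_of_disjoint, Finset.card_image_of_injective _ castAdd_inj,
    Finset.card_image_of_injective _ natAdd_inj]
  rw [Finset.disjoint_left]
  intro i hi1 hi2
  simp only [Finset.mem_image] at hi1 hi2
  obtain ⟨a, _, rfl⟩ := hi1
  obtain ⟨b, _, he⟩ := hi2
  exact castAdd_ne_natAdd a b he.symm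

lemma card_split (s : Finset (Fin (m + n))) :
    s.card = (split1 s).card + (split2 s).card := by
  conv_lhs => rw [← join_split s]
  rw [card_join]

lemma lt_low {a a' : Fin m} :
    dsum p1 p2 (Fin.castAdd n a) < dsum p1 p2 (Fin.castAdd n a') ↔ p1 a < p1 a' := by
  rw [dsum_castAdd, dsum_castAdd, Fin.lt_def, Fin.lt_def]
  simp

lemma lt_high {b b' : Fin n} :
    dsum p1 p2 (Fin.natAdd m b) < dsum p1 p2 (Fin.natAdd m b') ↔ p2 b < p2 b' := by
  rw [dsum_natAdd, dsum_natAdd, Fin.lt_def, Fin.lt_def]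
  simp

lemma lt_mix (a : Fin m) (b : Fin n) :
    dsum p1 p2 (Fin.castAdd n a) < dsum p1 p2 (Fin.natAdd m b) := by
  rw [dsum_castAdd, dsum_natAdd, Fin.lt_def]
  simp only [Fin.coe_castAdd, Fin.coe_natAdd]
  have := (p1 a).isLt
  omega

lemma castAdd_lt_castAdd {a a' : Fin m} :
    Fin.castAdd n a < Fin.castAdd n a' ↔ a < a' := by
  rw [Fin.lt_def, Fin.lt_def]; simp

lemma natAdd_lt_natAdd {b b' : Fin n} :
    Fin.natAdd m b < Fin.natAdd m b' ↔ b < b' := by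
  rw [Fin.lt_def, Fin.lt_def]; simp

lemma castAdd_lt_natAdd (a : Fin m) (b : Fin n) :
    Fin.castAdd n a < Fin.natAdd m b := by
  rw [Fin.lt_def]
  simp only [Fin.coe_castAdd, Fin.coe_natAdd]
  have := a.isLt
  omega

lemma inc_split1 {s : Finset (Fin (m + n))} (h : IsIncSubseq ⇑(dsum p1 p2) s) :
    IsIncSubseq ⇑p1 (split1 s) := by
  intro a ha a' ha' hlt
  exact lt_low.mp (h _ (mem_split1.mp ha) _ (mem_split1.mp ha') (castAdd_lt_castAdd.mpr hlt))

lemma inc_split2 {s : Finset (Fin (m + n))} (h : IsIncSubseq ⇑(dsum p1 p2) s) :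
    IsIncSubseq ⇑p2 (split2 s) := by
  intro b hb b' hb' hlt
  exact lt_high.mp (h _ (mem_split2.mp hb) _ (mem_split2.mp hb') (natAdd_lt_natAdd.mpr hlt))

lemma inc_join {s1 : Finset (Fin m)} {s2 : Finset (Fin n)}
    (h1 : IsIncSubseq ⇑p1 s1) (h2 : IsIncSubseq ⇑p2 s2) :
    IsIncSubseq ⇑(dsum p1 p2) (join s1 s2) := by
  intro i hi j hj hij
  rw [mem_join] at hi hj
  rcases hi with ⟨a, ha, rfl⟩ | ⟨b, hb, rfl⟩ <;> rcases hj with ⟨a', ha', rfl⟩ | ⟨b', hb', rfl⟩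
  · exact lt_low.mpr (h1 _ ha _ ha' (castAdd_lt_castAdd.mp hij))
  · exact lt_mix a b'
  · exact absurd (hij.trans (castAdd_lt_natAdd a' b)) (lt_irrefl _)
  · exact lt_high.mpr (h2 _ hb _ hb' (natAdd_lt_natAdd.mp hij))

lemma dsum_hasULIS (h1 : HasULIS ⇑p1) (h2 : HasULIS ⇑p2) : HasULIS ⇑(dsum p1 p2) := by
  obtain ⟨s1, ⟨hs1inc, hs1max⟩, hs1uniq⟩ := h1
  obtain ⟨s2, ⟨hs2inc, hs2max⟩, hs2uniq⟩ := h2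
  refine ⟨join s1 s2, ⟨inc_join hs1inc hs2inc, ?_⟩, ?_⟩
  · intro t ht
    rw [card_split t, card_join]
    exact Nat.add_le_add (hs1max _ (inc_split1 ht)) (hs2max _ (inc_split2 ht))
  · rintro y ⟨hyinc, hymax⟩
    have hy1 : IsIncSubseq ⇑p1 (split1 y) := inc_split1 hyinc
    have hy2 : IsIncSubseq ⇑p2 (split2 y) := inc_split2 hyinc
    have hge : (join s1 s2).card ≤ y.card := hymax _ (inc_join hs1inc hs2inc)
    rw [card_join] at hge
    rw [card_split y] at hge
    have hle1 : (split1 y).card ≤ s1.card := hs1max _ hy1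
    have hle2 : (split2 y).card ≤ s2.card := hs2max _ hy2
    have he1 : (split1 y).card = s1.card := by omega
    have he2 : (split2 y).card = s2.card := by omega
    have hu1 : split1 y = s1 := by
      apply hs1uniq
      refine ⟨hy1, fun u hu => ?_⟩
      rw [he1]
      exact hs1max u hu
    have hu2 : split2 y = s2 := by
      apply hs2uniq
      refine ⟨hy2, fun u hu => ?_⟩
      rw [he2]
      exact hs2max u hu
    rw [← join_split y, hu1, hu2]

lemma dsum_avoids (hk : 2 ≤ k) (hq : Indecomposable q)
    (h1 : Avoids q p1) (h2 : Avoids q p2) : Avoids q (dsum p1 p2) := by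
  rintro ⟨f, hf, hcond⟩
  set s := Finset.univ.filter (fun b : Fin k => m ≤ (f b : ℕ)) with hs
  rcases Finset.eq_empty_or_nonempty s with hse | hsne
  · -- all entries land in the first block
    have hlow : ∀ b : Fin k, (f b : ℕ) < m := by
      intro b
      by_contra hcon
      have : b ∈ s := by
        rw [hs, Finset.mem_filter]
        exact ⟨Finset.mem_univ b, by omega⟩
      rw [hse] at this
      exact absurd this (Finset.notMem_empty b)
    refine h1 ⟨fun b => ⟨f b, hlow b⟩, ?_, ?_⟩
    · intro a b hab
      have : f a < f b := hf hab
      rw [Fin.lt_def] at this ⊢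
      exact this
    · intro a b
      have he : ∀ c : Fin k, f c = Fin.castAdd n ⟨(f c : ℕ), hlow c⟩ := by
        intro c; exact Fin.ext rfl
      rw [← hcond a b, he a, he b]
      exact lt_low.symm
  · set b0 := s.min' hsne with hb0
    have hb0s : b0 ∈ s := s.min'_mem hsne
    have hb0m : m ≤ (f b0 : ℕ) := by
      rw [hs] at hb0s
      exact (Finset.mem_filter.mp hb0s).2
    rcases Nat.eq_zero_or_pos (b0 : ℕ) with hz | hpos
    · -- all entries land in the second block
      have hhigh : ∀ b : Fin k, m ≤ (f b : ℕ) := by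
        intro b
        have : b0 ≤ b := by
          rw [Fin.le_def, hz]
          omega
        rcases eq_or_lt_of_le this with he | hlt
        · rw [← he]; exact hb0m
        · have := hf hlt
          rw [Fin.lt_def] at this
          omega
      have hfn : ∀ b : Fin k, (f b : ℕ) - m < n := by
        intro b
        have := (f b).isLt
        omega
      refine h2 ⟨fun b => ⟨(f b : ℕ) - m, hfn b⟩, ?_, ?_⟩
      · intro a b hab
        have : f a < f b := hf hab
        rw [Fin.lt_def] at this ⊢
        have := hhigh a
        simp only
        omega
      · intro a b
        have he : ∀ c : Fin k, f c = Fin.natAdd m ⟨(f c : ℕ) - m, hfn c⟩ := by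
          intro c
          apply Fin.ext
          simp only [Fin.coe_natAdd]
          have := hhigh c
          omega
        rw [← hcond a b, he a, he b]
        exact lt_high.symm
    · -- split occurrence: contradicts indecomposability
      refine hq ⟨(b0 : ℕ), hpos, b0.isLt, ?_⟩
      intro a b ha hb
      have hfa : (f a : ℕ) < m := by
        by_contra hcon
        have has : a ∈ s := by
          rw [hs, Finset.mem_filter]
          exact ⟨Finset.mem_univ a, by omega⟩
        have := s.min'_le a has
        rw [← hb0] at this
        rw [Fin.le_def] at this
        omega
      have hfb : m ≤ (f b : ℕ) := by
        have : b0 ≤ b := by rw [Fin.le_def]; omega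
        rcases eq_or_lt_of_le this with he | hlt
        · rw [← he]; exact hb0m
        · have := hf hlt
          rw [Fin.lt_def] at this
          omega
      apply (hcond a b).mp
      have hea : f a = Fin.castAdd n ⟨(f a : ℕ), hfa⟩ := Fin.ext rfl
      have heb : f b = Fin.natAdd m ⟨(f b : ℕ) - m, by have := (f b).isLt; omega⟩ := by
        apply Fin.ext
        simp only [Fin.coe_natAdd]
        omega
      rw [hea, heb]
      exact lt_mix _ _

lemma dsum_injective2 {p1 p1' : Equiv.Perm (Fin m)} {p2 p2' : Equiv.Perm (Fin n)}
    (h : dsum p1 p2 = dsum p1' p2') : p1 = p1' ∧ p2 = p2' := by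
  constructor
  · apply Equiv.ext
    intro a
    have := congrArg (fun g : Equiv.Perm (Fin (m + n)) => g (Fin.castAdd n a)) h
    simp only [dsum_castAdd] at this
    exact castAdd_inj this
  · apply Equiv.ext
    intro b
    have := congrArg (fun g : Equiv.Perm (Fin (m + n)) => g (Fin.natAdd m b)) h
    simp only [dsum_natAdd] at this
    exact natAdd_inj this

lemma uNum_supermul (hk : 2 ≤ k) (hq : Indecomposable q) (m n : ℕ) :
    uNum q m * uNum q n ≤ uNum q (m + n) := by
  rw [uNum, uNum, uNum, ← Nat.card_prod]
  refine Nat.card_le_card_of_injective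
    (fun x : {p : Equiv.Perm (Fin m) // Avoids q p ∧ HasULIS ⇑p} ×
             {p : Equiv.Perm (Fin n) // Avoids q p ∧ HasULIS ⇑p} =>
      (⟨dsum x.1.1 x.2.1, dsum_avoids hk hq x.1.2.1 x.2.2.1,
        dsum_hasULIS x.1.2.2 x.2.2.2⟩ :
        {p : Equiv.Perm (Fin (m + n)) // Avoids q p ∧ HasULIS ⇑p})) ?_
  rintro ⟨⟨pa, ha⟩, ⟨pb, hb⟩⟩ ⟨⟨pa', ha'⟩, ⟨pb', hb'⟩⟩ h
  simp only [Subtype.mk.injEq] at h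
  obtain ⟨e1, e2⟩ := dsum_injective2 h
  simp only [Prod.mk.injEq, Subtype.mk.injEq]
  exact ⟨e1, e2⟩

theorem glue (q : Equiv.Perm (Fin k)) (B : ℕ) (hB1 : 1 ≤ B)
    (hpos : ∀ n, 1 ≤ uNum q n) (hub : ∀ n, 1 ≤ n → uNum q n ≤ B ^ n)
    (hsup : ∀ a b, uNum q a * uNum q b ≤ uNum q (a + b)) :
    ∃ L : ℝ, Filter.Tendsto (fun n : ℕ => (uNum q n : ℝ) ^ ((n : ℝ)⁻¹))
      Filter.atTop (nhds L) := by
  set u : ℕ → ℝ := fun n => -Real.log (uNum q n) with hu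
  have husub : Subadditive u := by
    intro a b
    have h1 : (1 : ℝ) ≤ (uNum q a : ℝ) := by exact_mod_cast hpos a
    have h2 : (1 : ℝ) ≤ (uNum q b : ℝ) := by exact_mod_cast hpos b
    have h3 : (uNum q a : ℝ) * uNum q b ≤ uNum q (a + b) := by exact_mod_cast hsup a b
    have h4 : Real.log (uNum q a) + Real.log (uNum q b) ≤ Real.log (uNum q (a + b)) := by
      rw [← Real.log_mul (by linarith) (by linarith)]
      exact Real.log_le_log (by nlinarith) h3
    simp only [hu]
    linarith
  have hlogB : 0 ≤ Real.log B := Real.log_nonneg (by exact_mod_cast hB1)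
  have hbdd : BddBelow (Set.range fun n : ℕ => u n / n) := by
    refine ⟨-Real.log B, ?_⟩
    rintro x ⟨n, rfl⟩
    rcases Nat.eq_zero_or_pos n with rfl | hn
    · simp only [Nat.cast_zero, div_zero]
      linarith
    · have hnR : (0 : ℝ) < n := by exact_mod_cast hn
      rw [le_div_iff₀ hnR]
      have h1 : (1 : ℝ) ≤ (uNum q n : ℝ) := by exact_mod_cast hpos n
      have h2 : (uNum q n : ℝ) ≤ (B : ℝ) ^ n := by exact_mod_cast hub n hn
      have h3 : Real.log (uNum q n) ≤ n * Real.log B := by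
        calc Real.log (uNum q n) ≤ Real.log ((B : ℝ) ^ n) := Real.log_le_log (by linarith) h2
          _ = n * Real.log B := Real.log_pow _ _
      simp only [hu]
      nlinarith
  have hlim := husub.tendsto_lim hbdd
  refine ⟨Real.exp (-husub.lim), ?_⟩
  have hcont : Filter.Tendsto (fun n : ℕ => Real.exp (-(u n / n))) atTop
      (nhds (Real.exp (-husub.lim))) :=
    (Real.continuous_exp.tendsto _).comp hlim.neg
  refine hcont.congr' ?_
  filter_upwards [eventually_ge_atTop 1] with n hn
  have h1 : (0 : ℝ) < (uNum q n : ℝ) := by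
    have := hpos n
    exact_mod_cast this
  rw [Real.rpow_def_of_pos h1]
  congr 1
  simp only [hu]
  field_simp

end ULISaux

end ULISauxiliary

/-- For an indecomposable pattern `q` of length at least `2`, the limit as `n → ∞`
of `(u_n(q))^{1/n}` exists as a finite real number. -/
theorem lim_root_uNum_exists {k : ℕ} (hk : 2 ≤ k) (q : Equiv.Perm (Fin k))
    (hq : Indecomposable q) :
    ∃ L : ℝ, Filter.Tendsto (fun n : ℕ => (uNum q n : ℝ) ^ ((n : ℝ)⁻¹))
      Filter.atTop (nhds L) :=
  ULISaux.glue q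
    (2 ^ (16 * (k ^ 4 + 2 * k * (k ^ 2 + 1) * ((k - 1) * Nat.choose (k ^ 2) k))))
    Nat.one_le_two_pow (ULISaux.uNum_pos hk hq)
    (fun n hn => (ULISaux.uNum_le_AvSet_card n).trans (ULISaux.AvSet_exp hk n hn))
    (fun a b => ULISaux.uNum_supermul hk hq a b)
end

section
/- Let p be a 231-avoiding permutation of length n ≥ 1 with p(i) = n, let L be the pattern of p(1)⋯p(i−1) and let R be the pattern of p(i+1)⋯p(n) (empty strings are regarded as permutations having a ULIS). Then p has a unique longest increasing subsequence if and only if L has a ULIS, R has a ULIS, and R does not have length exactly 1. -/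
theorem isIncSubseq_empty {k : ℕ} {α : Type*} [Preorder α] (f : Fin k → α) :
    IsIncSubseq f (∅ : Finset (Fin k)) := by
  intro a ha; simp at ha

theorem isIncSubseq_singleton {k : ℕ} {α : Type*} [Preorder α] (f : Fin k → α) (x : Fin k) :
    IsIncSubseq f {x} := by
  intro a ha b hb hab
  rw [Finset.mem_singleton] at ha hb
  subst ha; subst hb; exact absurd hab (lt_irrefl _)

theorem exists_max_inc {k : ℕ} {α : Type*} [Preorder α] (f : Fin k → α) :
    ∃ s, IsIncSubseq f s ∧ ∀ t, IsIncSubseq f t → t.card ≤ s.card := by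
  classical
  obtain ⟨s, hs, hmax⟩ := Finset.exists_max_image
    (Finset.univ.filter fun s => IsIncSubseq f s) Finset.card
    ⟨∅, Finset.mem_filter.mpr ⟨Finset.mem_univ _, isIncSubseq_empty f⟩⟩
  exact ⟨s, (Finset.mem_filter.mp hs).2,
    fun t ht => hmax t (Finset.mem_filter.mpr ⟨Finset.mem_univ _, ht⟩)⟩

def eL {n : ℕ} (i : Fin (n+1)) (j : Fin (i:ℕ)) : Fin (n+1) := ⟨(j:ℕ), lt_trans j.isLt i.isLt⟩
def eR {n : ℕ} (i : Fin (n+1)) (j : Fin (n - (i:ℕ))) : Fin (n+1) :=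
  ⟨(i:ℕ)+1+(j:ℕ), by have h1 := j.isLt; have h2 := i.isLt; omega⟩

theorem eL_inj {n : ℕ} (i : Fin (n+1)) : Function.Injective (eL i) := fun a b h =>
  Fin.ext (by simpa [eL, Fin.ext_iff] using h)

theorem eR_inj {n : ℕ} (i : Fin (n+1)) : Function.Injective (eR i) := fun a b h => by
  simp [eR, Fin.ext_iff] at h
  exact Fin.ext (by omega)

theorem eL_lt {n : ℕ} (i : Fin (n+1)) (j : Fin (i:ℕ)) : eL i j < i := j.isLt

theorem lt_eR {n : ℕ} (i : Fin (n+1)) (j : Fin (n - (i:ℕ))) : i < eR i j := by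
  simp [eR, Fin.lt_def]; omega

theorem eL_ne_eR {n : ℕ} (i : Fin (n+1)) (j : Fin (i:ℕ)) (k : Fin (n - (i:ℕ))) :
    eL i j ≠ eR i k := by
  simp [eL, eR, Fin.ext_iff]
  have := j.isLt; omega

def liftL {n : ℕ} (i : Fin (n+1)) (a : Finset (Fin (i:ℕ))) : Finset (Fin (n+1)) :=
  a.image (eL i)
def liftR {n : ℕ} (i : Fin (n+1)) (b : Finset (Fin (n - (i:ℕ)))) : Finset (Fin (n+1)) :=
  b.image (eR i)
def projL {n : ℕ} (i : Fin (n+1)) (s : Finset (Fin (n+1))) : Finset (Fin (i:ℕ)) :=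
  Finset.univ.filter fun j => eL i j ∈ s
def projR {n : ℕ} (i : Fin (n+1)) (s : Finset (Fin (n+1))) : Finset (Fin (n - (i:ℕ))) :=
  Finset.univ.filter fun j => eR i j ∈ s

theorem mem_projL {n : ℕ} (i : Fin (n+1)) {s : Finset (Fin (n+1))} {j : Fin (i:ℕ)} :
    j ∈ projL i s ↔ eL i j ∈ s := by simp [projL]
theorem mem_projR {n : ℕ} (i : Fin (n+1)) {s : Finset (Fin (n+1))} {j : Fin (n - (i:ℕ))} :
    j ∈ projR i s ↔ eR i j ∈ s := by simp [projR]
theorem mem_liftL {n : ℕ} (i : Fin (n+1)) {a : Finset (Fin (i:ℕ))} {x : Fin (n+1)} :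
    x ∈ liftL i a ↔ ∃ j ∈ a, eL i j = x := by simp [liftL]
theorem mem_liftR {n : ℕ} (i : Fin (n+1)) {b : Finset (Fin (n - (i:ℕ)))} {x : Fin (n+1)} :
    x ∈ liftR i b ↔ ∃ j ∈ b, eR i j = x := by simp [liftR]

theorem classify {n : ℕ} (i : Fin (n+1)) (x : Fin (n+1)) :
    (∃ j, eL i j = x) ∨ x = i ∨ ∃ j, eR i j = x := by
  rcases lt_trichotomy (x:ℕ) (i:ℕ) with h | h | h
  · exact Or.inl ⟨⟨(x:ℕ), h⟩, rfl⟩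
  · exact Or.inr (Or.inl (Fin.ext h))
  · refine Or.inr (Or.inr ⟨⟨(x:ℕ) - (i:ℕ) - 1, ?_⟩, ?_⟩)
    · have := x.isLt; omega
    · apply Fin.ext; simp [eR]; omega

theorem projL_liftL_liftR {n : ℕ} (i : Fin (n+1)) (a : Finset (Fin (i:ℕ)))
    (b : Finset (Fin (n - (i:ℕ)))) : projL i (liftL i a ∪ liftR i b) = a := by
  ext j
  rw [mem_projL, Finset.mem_union, mem_liftL, mem_liftR]
  constructor
  · rintro (⟨j', hj', hE⟩ | ⟨j', hj', hE⟩)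
    · rwa [← eL_inj i hE]
    · exact absurd hE.symm (eL_ne_eR i j j')
  · intro hj; exact Or.inl ⟨j, hj, rfl⟩

theorem projR_liftL_liftR {n : ℕ} (i : Fin (n+1)) (a : Finset (Fin (i:ℕ)))
    (b : Finset (Fin (n - (i:ℕ)))) : projR i (liftL i a ∪ liftR i b) = b := by
  ext j
  rw [mem_projR, Finset.mem_union, mem_liftL, mem_liftR]
  constructor
  · rintro (⟨j', hj', hE⟩ | ⟨j', hj', hE⟩)
    · exact absurd hE (eL_ne_eR i j' j)
    · rwa [← eR_inj i hE]
  · intro hj; exact Or.inr ⟨j, hj, rfl⟩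

theorem projL_liftL_i {n : ℕ} (i : Fin (n+1)) (a : Finset (Fin (i:ℕ))) :
    projL i (liftL i a ∪ {i}) = a := by
  ext j
  rw [mem_projL, Finset.mem_union, mem_liftL, Finset.mem_singleton]
  constructor
  · rintro (⟨j', hj', hE⟩ | hE)
    · rwa [← eL_inj i hE]
    · exact absurd hE (ne_of_lt (eL_lt i j))
  · intro hj; exact Or.inl ⟨j, hj, rfl⟩

theorem i_not_mem_liftL {n : ℕ} (i : Fin (n+1)) (a : Finset (Fin (i:ℕ))) :
    i ∉ liftL i a := by
  rw [mem_liftL]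
  rintro ⟨j, _, hE⟩
  exact absurd hE (ne_of_lt (eL_lt i j))

theorem i_not_mem_liftR {n : ℕ} (i : Fin (n+1)) (b : Finset (Fin (n - (i:ℕ)))) :
    i ∉ liftR i b := by
  rw [mem_liftR]
  rintro ⟨j, _, hE⟩
  exact absurd hE (ne_of_gt (lt_eR i j))

theorem card_liftL {n : ℕ} (i : Fin (n+1)) (a : Finset (Fin (i:ℕ))) :
    (liftL i a).card = a.card := Finset.card_image_of_injective _ (eL_inj i)
theorem card_liftR {n : ℕ} (i : Fin (n+1)) (b : Finset (Fin (n - (i:ℕ)))) :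
    (liftR i b).card = b.card := Finset.card_image_of_injective _ (eR_inj i)

theorem disj_LR {n : ℕ} (i : Fin (n+1)) (a : Finset (Fin (i:ℕ)))
    (b : Finset (Fin (n - (i:ℕ)))) : Disjoint (liftL i a) (liftR i b) := by
  rw [Finset.disjoint_left]
  intro x hx hx'
  obtain ⟨j, _, rfl⟩ := (mem_liftL i).mp hx
  obtain ⟨j', _, h⟩ := (mem_liftR i).mp hx'
  exact absurd h.symm (eL_ne_eR i j j')

theorem card_union_LR {n : ℕ} (i : Fin (n+1)) (a : Finset (Fin (i:ℕ)))
    (b : Finset (Fin (n - (i:ℕ)))) : (liftL i a ∪ liftR i b).card = a.card + b.card := by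
  rw [Finset.card_union_of_disjoint (disj_LR i a b), card_liftL, card_liftR]

theorem card_union_Li {n : ℕ} (i : Fin (n+1)) (a : Finset (Fin (i:ℕ))) :
    (liftL i a ∪ {i}).card = a.card + 1 := by
  rw [Finset.card_union_of_disjoint (Finset.disjoint_singleton_right.mpr (i_not_mem_liftL i a)),
    card_liftL, Finset.card_singleton]

theorem decomp_not_mem {n : ℕ} (i : Fin (n+1)) (s : Finset (Fin (n+1))) (hs : i ∉ s) :
    s = liftL i (projL i s) ∪ liftR i (projR i s) := by
  ext x
  rw [Finset.mem_union, mem_liftL, mem_liftR]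
  constructor
  · intro hx
    rcases classify i x with ⟨j, rfl⟩ | rfl | ⟨j, rfl⟩
    · exact Or.inl ⟨j, (mem_projL i).mpr hx, rfl⟩
    · exact absurd hx hs
    · exact Or.inr ⟨j, (mem_projR i).mpr hx, rfl⟩
  · rintro (⟨j, hj, rfl⟩ | ⟨j, hj, rfl⟩)
    · exact (mem_projL i).mp hj
    · exact (mem_projR i).mp hj

theorem decomp_mem {n : ℕ} (i : Fin (n+1)) (s : Finset (Fin (n+1))) (hs : i ∈ s)
    (hR : projR i s = ∅) : s = liftL i (projL i s) ∪ {i} := by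
  ext x
  rw [Finset.mem_union, mem_liftL, Finset.mem_singleton]
  constructor
  · intro hx
    rcases classify i x with ⟨j, rfl⟩ | rfl | ⟨j, rfl⟩
    · exact Or.inl ⟨j, (mem_projL i).mpr hx, rfl⟩
    · exact Or.inr rfl
    · exact absurd ((mem_projR i).mpr hx) (by rw [hR]; exact Finset.notMem_empty j)
  · rintro (⟨j, hj, rfl⟩ | rfl)
    · exact (mem_projL i).mp hj
    · exact hs

theorem inc_projL {n : ℕ} (i : Fin (n+1)) (p : Equiv.Perm (Fin (n+1)))
    {s : Finset (Fin (n+1))} (hs : IsIncSubseq ⇑p s) :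
    IsIncSubseq (fun j => p (eL i j)) (projL i s) := by
  intro a ha b hb hab
  exact hs _ ((mem_projL i).mp ha) _ ((mem_projL i).mp hb) hab

theorem inc_projR {n : ℕ} (i : Fin (n+1)) (p : Equiv.Perm (Fin (n+1)))
    {s : Finset (Fin (n+1))} (hs : IsIncSubseq ⇑p s) :
    IsIncSubseq (fun j => p (eR i j)) (projR i s) := by
  intro a ha b hb hab
  refine hs _ ((mem_projR i).mp ha) _ ((mem_projR i).mp hb) ?_
  simp only [eR, Fin.lt_def] at hab ⊢
  omega

theorem inc_union_LR {n : ℕ} (i : Fin (n+1)) (p : Equiv.Perm (Fin (n+1)))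
    (hcross : ∀ a b : Fin (n+1), a < i → i < b → p a < p b)
    {a : Finset (Fin (i:ℕ))} {b : Finset (Fin (n - (i:ℕ)))}
    (ha : IsIncSubseq (fun j => p (eL i j)) a) (hb : IsIncSubseq (fun j => p (eR i j)) b) :
    IsIncSubseq ⇑p (liftL i a ∪ liftR i b) := by
  intro x hx y hy hxy
  rw [Finset.mem_union] at hx hy
  rcases hx with hx | hx <;> rcases hy with hy | hy
  · obtain ⟨j, hj, rfl⟩ := (mem_liftL i).mp hx
    obtain ⟨j', hj', rfl⟩ := (mem_liftL i).mp hy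
    exact ha j hj j' hj' hxy
  · obtain ⟨j, hj, rfl⟩ := (mem_liftL i).mp hx
    obtain ⟨j', hj', rfl⟩ := (mem_liftR i).mp hy
    exact hcross _ _ (eL_lt i j) (lt_eR i j')
  · obtain ⟨j, hj, rfl⟩ := (mem_liftR i).mp hx
    obtain ⟨j', hj', rfl⟩ := (mem_liftL i).mp hy
    exact absurd hxy (by simp only [eL, eR, Fin.lt_def]; have := j'.isLt; omega)
  · obtain ⟨j, hj, rfl⟩ := (mem_liftR i).mp hx
    obtain ⟨j', hj', rfl⟩ := (mem_liftR i).mp hy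
    refine hb j hj j' hj' ?_
    simp only [eR, Fin.lt_def] at hxy ⊢
    omega

theorem inc_union_Li {n : ℕ} (i : Fin (n+1)) (p : Equiv.Perm (Fin (n+1)))
    (hmaxv : ∀ j : Fin (n+1), j ≠ i → p j < p i)
    {a : Finset (Fin (i:ℕ))} (ha : IsIncSubseq (fun j => p (eL i j)) a) :
    IsIncSubseq ⇑p (liftL i a ∪ {i}) := by
  intro x hx y hy hxy
  rw [Finset.mem_union, Finset.mem_singleton] at hx hy
  rcases hx with hx | hx <;> rcases hy with hy | hy
  · obtain ⟨j, hj, rfl⟩ := (mem_liftL i).mp hx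
    obtain ⟨j', hj', rfl⟩ := (mem_liftL i).mp hy
    exact ha j hj j' hj' hxy
  · obtain ⟨j, hj, rfl⟩ := (mem_liftL i).mp hx
    rw [hy]
    exact hmaxv _ (ne_of_lt (eL_lt i j))
  · obtain ⟨j, hj, rfl⟩ := (mem_liftL i).mp hy
    rw [hx] at hxy
    exact absurd hxy (asymm (eL_lt i j))
  · rw [hx, hy] at hxy
    exact absurd hxy (lt_irrefl _)

theorem projR_eq_empty {n : ℕ} (i : Fin (n+1)) (p : Equiv.Perm (Fin (n+1)))
    (hmaxv : ∀ j : Fin (n+1), j ≠ i → p j < p i)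
    {s : Finset (Fin (n+1))} (hs : IsIncSubseq ⇑p s) (hmem : i ∈ s) : projR i s = ∅ := by
  rw [Finset.eq_empty_iff_forall_notMem]
  intro j hj
  have h1 : p i < p (eR i j) := hs i hmem _ ((mem_projR i).mp hj) (lt_eR i j)
  have h2 : p (eR i j) < p i := hmaxv _ (ne_of_gt (lt_eR i j))
  exact absurd h1 (asymm h2)

theorem maxv_of_last {n : ℕ} (p : Equiv.Perm (Fin (n+1))) (i : Fin (n+1))
    (hi : p i = Fin.last n) : ∀ j : Fin (n+1), j ≠ i → p j < p i := by
  intro j hj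
  have h2 : p j ≠ p i := fun h => hj (p.injective h)
  rw [hi] at h2 ⊢
  exact lt_of_le_of_ne (Fin.le_last _) h2

theorem cross_of_avoids {n : ℕ} (p : Equiv.Perm (Fin (n+1))) (hp : Avoids pattern231 p)
    (i : Fin (n+1)) (hi : p i = Fin.last n) :
    ∀ a b : Fin (n+1), a < i → i < b → p a < p b := by
  intro a b ha hb
  by_contra hc
  push_neg at hc
  have hmaxv := maxv_of_last p i hi
  have hba : p b < p a := lt_of_le_of_ne hc
    (fun h => (ne_of_lt (lt_trans ha hb)) (p.injective h).symm)
  have h1 : ((p a):ℕ) < ((p i):ℕ) := hmaxv a (ne_of_lt ha)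
  have h2 : ((p b):ℕ) < ((p i):ℕ) := hmaxv b (ne_of_gt hb)
  have h3 : ((p b):ℕ) < ((p a):ℕ) := hba
  refine hp ⟨![a, i, b], ?_, ?_⟩
  · intro x y hxy
    fin_cases x <;> fin_cases y <;>
      simp only [Matrix.cons_val_zero, Matrix.cons_val_one, Matrix.head_cons,
        Matrix.cons_val_two, Matrix.tail_cons, Fin.mk_lt_mk] <;>
      first
        | exact absurd hxy (by decide)
        | exact ha
        | exact hb
        | exact lt_trans ha hb
  · intro x y
    fin_cases x <;> fin_cases y <;>
      simp only [pattern231, Equiv.coe_fn_mk, Matrix.cons_val_zero, Matrix.cons_val_one,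
        Matrix.head_cons, Matrix.cons_val_two, Matrix.tail_cons, Fin.lt_def] <;>
      simp <;> omega

/-- Let `p` be a 231-avoiding permutation of length `n+1 ≥ 1`, with the maximum entry
at position `i`; let `L` be the prefix of `p` before position `i` and `R` the suffix
after position `i`. Then `p` has a ULIS if and only if `L` has a ULIS, `R` has a ULIS,
and `R` does not have length exactly `1`. -/
theorem hasULIS_231_iff (n : ℕ) (p : Equiv.Perm (Fin (n + 1)))
    (hp : Avoids pattern231 p) (i : Fin (n + 1)) (hi : p i = Fin.last n) :
    HasULIS ⇑p ↔
      (HasULIS (fun j : Fin (i : ℕ) => p ⟨(j : ℕ), lt_trans j.isLt i.isLt⟩) ∧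
       HasULIS (fun j : Fin (n - (i : ℕ)) =>
         p ⟨(i : ℕ) + 1 + (j : ℕ), by have h1 := j.isLt; have h2 := i.isLt; omega⟩) ∧
       n - (i : ℕ) ≠ 1) := by
  classical
  have hmaxv := maxv_of_last p i hi
  have hcross := cross_of_avoids p hp i hi
  show HasULIS ⇑p ↔
    (HasULIS (fun j => p (eL i j)) ∧ HasULIS (fun j => p (eR i j)) ∧ n - (i:ℕ) ≠ 1)
  simp only [HasULIS, ExistsUnique]
  obtain ⟨am, ham, hamax⟩ := exists_max_inc (fun j => p (eL i j))
  obtain ⟨bm, hbm, hbmax⟩ := exists_max_inc (fun j => p (eR i j))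
  have emptyR : n - (i:ℕ) = 0 → ∀ b : Finset (Fin (n - (i:ℕ))), b = ∅ := by
    intro hm b
    rw [Finset.eq_empty_iff_forall_notMem]
    intro x _
    have := x.isLt
    omega
  have cardmem : ∀ s : Finset (Fin (n+1)), IsIncSubseq ⇑p s → i ∈ s →
      s.card = (projL i s).card + 1 := by
    intro s hs hmem
    conv_lhs => rw [decomp_mem i s hmem (projR_eq_empty i p hmaxv hs hmem)]
    exact card_union_Li i _
  have cardnotmem : ∀ s : Finset (Fin (n+1)), IsIncSubseq ⇑p s → i ∉ s →
      s.card = (projL i s).card + (projR i s).card := by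
    intro s hs hmem
    conv_lhs => rw [decomp_not_mem i s hmem]
    exact card_union_LR i _ _
  have bound : ∀ s : Finset (Fin (n+1)), IsIncSubseq ⇑p s →
      s.card ≤ am.card + max 1 bm.card := by
    intro s hs
    by_cases hmem : i ∈ s
    · rw [cardmem s hs hmem]
      have h1 := hamax _ (inc_projL i p hs)
      have h2 : (1:ℕ) ≤ max 1 bm.card := le_max_left _ _
      omega
    · rw [cardnotmem s hs hmem]
      have h1 := hamax _ (inc_projL i p hs)
      have h2 := hbmax _ (inc_projR i p hs)
      have h3 : bm.card ≤ max 1 bm.card := le_max_right _ _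
      omega
  constructor
  · rintro ⟨s, ⟨hsI, hsM⟩, hsU⟩
    have hcontra : 1 ≤ n - (i:ℕ) → bm.card ≤ 1 → False := by
      intro hm hb1
      have hM1 : max 1 bm.card = 1 := max_eq_left hb1
      have ht0I : IsIncSubseq ⇑p (liftL i am ∪ {i}) := inc_union_Li i p hmaxv ham
      have ht1I : IsIncSubseq ⇑p (liftL i am ∪ liftR i {⟨0, hm⟩}) :=
        inc_union_LR i p hcross ham (isIncSubseq_singleton _ _)
      have ht0M : ∀ t, IsIncSubseq ⇑p t → t.card ≤ (liftL i am ∪ {i}).card := by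
        intro t ht
        rw [card_union_Li]
        have hb := bound t ht
        rw [hM1] at hb
        omega
      have ht1M : ∀ t, IsIncSubseq ⇑p t → t.card ≤ (liftL i am ∪ liftR i {⟨0, hm⟩}).card := by
        intro t ht
        rw [card_union_LR, Finset.card_singleton]
        have hb := bound t ht
        rw [hM1] at hb
        omega
      have he0 := hsU _ ⟨ht0I, ht0M⟩
      have he1 := hsU _ ⟨ht1I, ht1M⟩
      have heq : liftL i am ∪ {i} = liftL i am ∪ liftR i {⟨0, hm⟩} := he0.trans he1.symm
      have hmem : i ∈ liftL i am ∪ liftR i {⟨0, hm⟩} :=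
        heq ▸ (Finset.mem_union_right _ (Finset.mem_singleton_self i))
      rcases Finset.mem_union.mp hmem with h | h
      · exact i_not_mem_liftL i am h
      · exact i_not_mem_liftR i _ h
    have hne1 : n - (i:ℕ) ≠ 1 := by
      intro hm
      refine hcontra (by omega) ?_
      calc bm.card ≤ (Finset.univ : Finset (Fin (n - (i:ℕ)))).card := Finset.card_le_univ bm
        _ = 1 := by rw [Finset.card_univ, Fintype.card_fin, hm]
    refine ⟨⟨am, ⟨ham, hamax⟩, ?_⟩, ⟨bm, ⟨hbm, hbmax⟩, ?_⟩, hne1⟩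
    · rintro a ⟨haI, haM⟩
      have hca : a.card = am.card := le_antisymm (hamax a haI) (haM am ham)
      by_cases hm : n - (i:ℕ) = 0
      · have hbm0 : bm.card = 0 := by rw [emptyR hm bm]; simp
        have hMx : max 1 bm.card = 1 := max_eq_left (by omega)
        have key : ∀ c : Finset (Fin (i:ℕ)), IsIncSubseq (fun j => p (eL i j)) c →
            c.card = am.card → liftL i c ∪ {i} = s := by
          intro c hcI hcc
          refine hsU _ ⟨inc_union_Li i p hmaxv hcI, ?_⟩
          intro t ht
          rw [card_union_Li, hcc]
          have hb := bound t ht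
          rw [hMx] at hb
          omega
        have heq := (key a haI hca).trans (key am ham rfl).symm
        have heq2 := congrArg (projL i) heq
        rwa [projL_liftL_i, projL_liftL_i] at heq2
      · have hm1 : 1 ≤ n - (i:ℕ) := by omega
        have hr2 : 2 ≤ bm.card := by
          by_contra h
          exact hcontra hm1 (by omega)
        have hMx : max 1 bm.card = bm.card := max_eq_right (by omega)
        have key : ∀ c : Finset (Fin (i:ℕ)), IsIncSubseq (fun j => p (eL i j)) c →
            c.card = am.card → liftL i c ∪ liftR i bm = s := by
          intro c hcI hcc
          refine hsU _ ⟨inc_union_LR i p hcross hcI hbm, ?_⟩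
          intro t ht
          rw [card_union_LR, hcc]
          have hb := bound t ht
          rw [hMx] at hb
          omega
        have heq := (key a haI hca).trans (key am ham rfl).symm
        have heq2 := congrArg (projL i) heq
        rwa [projL_liftL_liftR, projL_liftL_liftR] at heq2
    · rintro b ⟨hbI, hbM⟩
      by_cases hm : n - (i:ℕ) = 0
      · rw [emptyR hm b, emptyR hm bm]
      · have hm1 : 1 ≤ n - (i:ℕ) := by omega
        have hr2 : 2 ≤ bm.card := by
          by_contra h
          exact hcontra hm1 (by omega)
        have hMx : max 1 bm.card = bm.card := max_eq_right (by omega)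
        have hcb : b.card = bm.card := le_antisymm (hbmax b hbI) (hbM bm hbm)
        have key : ∀ c, IsIncSubseq (fun j => p (eR i j)) c →
            c.card = bm.card → liftL i am ∪ liftR i c = s := by
          intro c hcI hcc
          refine hsU _ ⟨inc_union_LR i p hcross ham hcI, ?_⟩
          intro t ht
          rw [card_union_LR, hcc]
          have hb := bound t ht
          rw [hMx] at hb
          omega
        have heq := (key b hbI hcb).trans (key bm hbm rfl).symm
        have heq2 := congrArg (projR i) heq
        rwa [projR_liftL_liftR, projR_liftL_liftR] at heq2
  · rintro ⟨⟨a0, ⟨ha0I, ha0M⟩, ha0U⟩, ⟨b0, ⟨hb0I, hb0M⟩, hb0U⟩, hne1⟩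
    have hauniq : ∀ a, IsIncSubseq (fun j => p (eL i j)) a →
        (∀ t, IsIncSubseq (fun j => p (eL i j)) t → t.card ≤ a.card) → a = am :=
      fun a h1 h2 => (ha0U a ⟨h1, h2⟩).trans (ha0U am ⟨ham, hamax⟩).symm
    have hbuniq : ∀ b, IsIncSubseq (fun j => p (eR i j)) b →
        (∀ t, IsIncSubseq (fun j => p (eR i j)) t → t.card ≤ b.card) → b = bm :=
      fun b h1 h2 => (hb0U b ⟨h1, h2⟩).trans (hb0U bm ⟨hbm, hbmax⟩).symm
    by_cases hm : n - (i:ℕ) = 0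
    · have hbm0 : bm.card = 0 := by rw [emptyR hm bm]; simp
      have hMx : max 1 bm.card = 1 := max_eq_left (by omega)
      refine ⟨liftL i am ∪ {i}, ⟨inc_union_Li i p hmaxv ham, ?_⟩, ?_⟩
      · intro t ht
        rw [card_union_Li]
        have hb := bound t ht
        rw [hMx] at hb
        omega
      · rintro t ⟨htI, htM⟩
        have h4 := htM _ (inc_union_Li i p hmaxv ham)
        rw [card_union_Li] at h4
        have hmem : i ∈ t := by
          by_contra hmem
          have h1 := cardnotmem t htI hmem
          have h2 : projR i t = ∅ := emptyR hm _
          rw [h2, Finset.card_empty] at h1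
          have h3 := hamax _ (inc_projL i p htI)
          omega
        have hc := cardmem t htI hmem
        have h6 := hamax _ (inc_projL i p htI)
        have hL : (projL i t).card = am.card := by omega
        have h8 : projL i t = am := hauniq _ (inc_projL i p htI)
          (fun t' ht' => by rw [hL]; exact hamax t' ht')
        rw [decomp_mem i t hmem (projR_eq_empty i p hmaxv htI hmem), h8]
    · have hm2 : 2 ≤ n - (i:ℕ) := by omega
      have hr2 : 2 ≤ bm.card := by
        by_contra h
        have hb1 : ∀ t, IsIncSubseq (fun j => p (eR i j)) t → t.card ≤ 1 := by
          intro t ht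
          have := hbmax t ht
          omega
        have e0 := hb0U {⟨0, by omega⟩} ⟨isIncSubseq_singleton _ _,
          fun t ht => by simpa using hb1 t ht⟩
        have e1 := hb0U {⟨1, by omega⟩} ⟨isIncSubseq_singleton _ _,
          fun t ht => by simpa using hb1 t ht⟩
        have heq := e0.trans e1.symm
        simp [Fin.ext_iff] at heq
      have hMx : max 1 bm.card = bm.card := max_eq_right (by omega)
      refine ⟨liftL i am ∪ liftR i bm, ⟨inc_union_LR i p hcross ham hbm, ?_⟩, ?_⟩
      · intro t ht
        rw [card_union_LR]
        have hb := bound t ht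
        rw [hMx] at hb
        omega
      · rintro t ⟨htI, htM⟩
        have h4 := htM _ (inc_union_LR i p hcross ham hbm)
        rw [card_union_LR] at h4
        have hmem : i ∉ t := by
          intro hmem
          have h1 := cardmem t htI hmem
          have h3 := hamax _ (inc_projL i p htI)
          omega
        have hc := cardnotmem t htI hmem
        have h6 := hamax _ (inc_projL i p htI)
        have h7 := hbmax _ (inc_projR i p htI)
        have hL : (projL i t).card = am.card := by omega
        have hR : (projR i t).card = bm.card := by omega
        have h8 : projL i t = am := hauniq _ (inc_projL i p htI)
          (fun t' ht' => by rw [hL]; exact hamax t' ht')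
        have h9 : projR i t = bm := hbuniq _ (inc_projR i p htI)
          (fun t' ht' => by rw [hR]; exact hbmax t' ht')
        rw [decomp_not_mem i t hmem, h8, h9]
end

section
/- If p is an involution that has a unique longest increasing subsequence, then every position of that unique longest increasing subsequence is a fixed point of p. -/
/-- If `p` is an involution with a unique longest increasing subsequence, then every
position of that unique longest increasing subsequence is a fixed point of `p`. -/
theorem ulis_of_involution_fixed (n : ℕ) (p : Equiv.Perm (Fin n)) (hinv : p⁻¹ = p)
    (hU : HasULIS ⇑p) (s : Finset (Fin n)) (hs : IsIncSubseq ⇑p s)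
    (hmax : ∀ t : Finset (Fin n), IsIncSubseq ⇑p t → t.card ≤ s.card) :
    ∀ i ∈ s, p i = i := by
  classical
  obtain ⟨s₀, _, huniq⟩ := hU
  have hpp : ∀ x : Fin n, p (p x) = x := by
    intro x
    have h := p.symm_apply_apply x
    rw [← Equiv.Perm.inv_def, hinv] at h
    exact h
  -- the image of s under p is also a maximal increasing subsequence
  have hs' : IsIncSubseq ⇑p (s.image p) := by
    intro a ha b hb hab
    obtain ⟨i, hi, rfl⟩ := Finset.mem_image.1 ha
    obtain ⟨j, hj, rfl⟩ := Finset.mem_image.1 hb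
    rw [hpp, hpp]
    rcases lt_trichotomy i j with h | h | h
    · exact h
    · exact absurd (h ▸ hab) (lt_irrefl _)
    · exact absurd (hs j hj i hi h) (not_lt.2 hab.le)
  have hcard : (s.image p).card = s.card := Finset.card_image_of_injective _ p.injective
  have heq : s.image p = s := by
    have h1 := huniq (s.image p) ⟨hs', fun t ht => hcard ▸ hmax t ht⟩
    have h2 := huniq s ⟨hs, hmax⟩
    rw [h1, h2]
  -- p composed with the order embedding of s is strictly monotone with values in s
  set e := s.orderEmbOfFin rfl with he
  have hmem : ∀ x : Fin s.card, p (e x) ∈ s := by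
    intro x
    have := Finset.mem_image_of_mem p (s.orderEmbOfFin_mem rfl x)
    rwa [heq] at this
  have hsm : StrictMono (fun x => p (e x)) := by
    intro a b hab
    exact hs (e a) (s.orderEmbOfFin_mem rfl a) (e b) (s.orderEmbOfFin_mem rfl b)
      (e.strictMono hab)
  have hfe : (fun x => p (e x)) = ⇑e := Finset.orderEmbOfFin_unique rfl hmem hsm
  intro i hi
  have : i ∈ Set.range ⇑e := by
    rw [he, Finset.range_orderEmbOfFin]
    exact hi
  obtain ⟨x, rfl⟩ := this
  exact congrFun hfe x
end
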